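/- arXiv:0806.4057 — 6 statements merged into one kernel-verified Lean document; each statement's English description precedes it below -/
import Mathlib

section
/- For all real ν with |ν| ≤ λ/2 (where λ > 0), one has (3/(4π)) ∫₀^∞ (sin⁴(λt/4)/(λ³(t/4)⁴)) cos(νt) dt = 1 - 6(ν/λ)² + 6(|ν|/λ)³. -/
/-!
With `ψ u = cos u - 1 + u ^ 2 / 2 ≥ 0`, the product `sin⁴ x cos y` is a combination of
`ψ y, ψ (2x ± y), ψ (4x ± y)`, because the constant and quadratic parts of the cosines cancel.
So the integrand is a combination of `ψ (w t) / t⁴` with `w ∈ {ν, λ/2 ± ν, λ ± ν}`, each of which is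
integrable with integral `π |w|³ / 12` by scaling. The constant `π / 12` comes from Tonelli and
`1 / u⁴ = (1/6) ∫₀^∞ s³ e^{-su} ds`: the Laplace transform of `ψ` is `1 / (s³ (s² + 1))`, leaving
`(1/6) ∫₀^∞ ds / (1 + s²)`. For `|ν| ≤ λ/2` all the frequencies but `ν` are nonnegative, which
makes the weighted sum of `|w|³` equal to `λ³ - 6λν² + 6|ν|³`.
-/

open Real MeasureTheory Set
open scoped Nat

lemma integral_pow_mul_exp_neg_mul_Ioi (n : ℕ) {r : ℝ} (hr : 0 < r) :
    ∫ t in Ioi 0, t ^ n * exp (-(r * t)) = n ! / r ^ (n + 1) := by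
  have h := integral_rpow_mul_exp_neg_mul_Ioi (a := n + 1) (by positivity) hr
  rw [add_sub_cancel_right, Gamma_nat_eq_factorial, ← Nat.cast_succ, rpow_natCast] at h
  convert h using 1
  · simp_rw [rpow_natCast]
  · rw [one_div_pow, one_div_mul_eq_div]

lemma integrableOn_pow_mul_exp_neg_mul_Ioi (n : ℕ) {r : ℝ} (hr : 0 < r) :
    IntegrableOn (fun t => t ^ n * exp (-(r * t))) (Ioi 0) :=
  Integrable.of_integral_ne_zero <| by
    rw [integral_pow_mul_exp_neg_mul_Ioi n hr]; positivity

section Laplace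

variable {f : ℝ → ℝ} (n : ℕ)

lemma lintegral_factorial_mul_div_pow_succ (hf : Measurable f) (hf0 : ∀ u ∈ Ioi 0, 0 ≤ f u) :
    ∫⁻ u in Ioi 0, ENNReal.ofReal (n ! * f u / u ^ (n + 1)) =
      ∫⁻ s in Ioi 0, ∫⁻ u in Ioi 0, ENNReal.ofReal (s ^ n * (exp (-(s * u)) * f u)) := by
  rw [lintegral_lintegral_swap (by fun_prop)]
  refine setLIntegral_congr_fun measurableSet_Ioi fun u hu => ?_
  have hmoment : ∫ s in Ioi 0, s ^ n * (exp (-(s * u)) * f u) = n ! * f u / u ^ (n + 1) := by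
    simp_rw [← mul_assoc, mul_comm _ u]
    rw [integral_mul_const, integral_pow_mul_exp_neg_mul_Ioi n hu]
    ring
  rw [← hmoment, ofReal_integral_eq_lintegral_ofReal]
  · simp_rw [← mul_assoc, mul_comm _ u]
    exact (integrableOn_pow_mul_exp_neg_mul_Ioi n hu).mul_const _
  · filter_upwards [ae_restrict_mem measurableSet_Ioi] with s hs
    exact mul_nonneg (pow_nonneg hs.le n) (mul_nonneg (exp_pos _).le (hf0 u hu))

theorem integral_div_pow_succ_eq_integral_laplace (hf : Measurable f)
    (hf0 : ∀ u ∈ Ioi 0, 0 ≤ f u)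
    (hL : ∀ s ∈ Ioi 0, IntegrableOn (fun u => exp (-(s * u)) * f u) (Ioi 0))
    (hI : IntegrableOn (fun s => s ^ n * ∫ u in Ioi 0, exp (-(s * u)) * f u) (Ioi 0)) :
    IntegrableOn (fun u => f u / u ^ (n + 1)) (Ioi 0) ∧
      ∫ u in Ioi 0, f u / u ^ (n + 1) =
        (∫ s in Ioi 0, s ^ n * ∫ u in Ioi 0, exp (-(s * u)) * f u) / n ! := by
  have hL0 : ∀ s ∈ Ioi 0, 0 ≤ ∫ u in Ioi 0, exp (-(s * u)) * f u := fun s _ =>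
    setIntegral_nonneg measurableSet_Ioi fun u hu => mul_nonneg (exp_pos _).le (hf0 u hu)
  set g : ℝ → ℝ := fun u => n ! * f u / u ^ (n + 1)
  have hg0 : 0 ≤ᵐ[volume.restrict (Ioi 0)] g := by
    filter_upwards [ae_restrict_mem measurableSet_Ioi] with u (hu : 0 < u)
    have := hf0 u hu
    positivity
  have hg_meas : AEStronglyMeasurable g (volume.restrict (Ioi 0)) := by
    fun_prop
  have hg : ∫⁻ u in Ioi 0, ENNReal.ofReal (g u) =
      ENNReal.ofReal (∫ s in Ioi 0, s ^ n * ∫ u in Ioi 0, exp (-(s * u)) * f u) := by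
    rw [lintegral_factorial_mul_div_pow_succ n hf hf0, ofReal_integral_eq_lintegral_ofReal hI]
    · refine setLIntegral_congr_fun measurableSet_Ioi fun s hs => ?_
      rw [← integral_const_mul, ofReal_integral_eq_lintegral_ofReal ((hL s hs).const_mul _)]
      filter_upwards [ae_restrict_mem measurableSet_Ioi] with u hu
      exact mul_nonneg (pow_nonneg hs.le n) (mul_nonneg (exp_pos _).le (hf0 u hu))
    · filter_upwards [ae_restrict_mem measurableSet_Ioi] with s hs
      exact mul_nonneg (pow_nonneg hs.le n) (hL0 s hs)
  have hg_int : IntegrableOn g (Ioi 0) :=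
    ⟨hg_meas, (hasFiniteIntegral_iff_ofReal hg0).2 (hg ▸ ENNReal.ofReal_lt_top)⟩
  have hfg : (fun u => f u / u ^ (n + 1)) = fun u => (n ! : ℝ)⁻¹ * g u := by
    ext u; simp only [g]; field_simp
  rw [hfg, integral_const_mul, integral_eq_lintegral_of_nonneg_ae hg0 hg_meas, hg,
    ENNReal.toReal_ofReal (setIntegral_nonneg measurableSet_Ioi
      fun s hs => mul_nonneg (pow_nonneg hs.le n) (hL0 s hs))]
  exact ⟨hg_int.const_mul _, inv_mul_eq_div _ _⟩

end Laplace

lemma exp_neg_mul_mul_cos_eq_re (s u : ℝ) :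
    exp (-(s * u)) * cos u = (Complex.exp ((-s + Complex.I) * u)).re := by
  simp [Complex.exp_re]

lemma integrableOn_exp_neg_mul_mul_cos {s : ℝ} (hs : 0 < s) :
    IntegrableOn (fun u => exp (-(s * u)) * cos u) (Ioi 0) := by
  simp_rw [exp_neg_mul_mul_cos_eq_re]
  exact (integrableOn_exp_mul_complex_Ioi (by simp [hs]) 0).re

lemma integral_exp_neg_mul_mul_cos {s : ℝ} (hs : 0 < s) :
    ∫ u in Ioi 0, exp (-(s * u)) * cos u = s / (s ^ 2 + 1) := by
  simp_rw [exp_neg_mul_mul_cos_eq_re]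
  have h := integral_re (integrableOn_exp_mul_complex_Ioi (a := -s + Complex.I) (by simp [hs]) 0)
  simp only [RCLike.re_to_complex] at h
  rw [h, integral_exp_mul_complex_Ioi (by simp [hs]), Complex.ofReal_zero, mul_zero,
    Complex.exp_zero, Complex.div_re, Complex.normSq_apply]
  simp only [Complex.neg_re, Complex.neg_im, Complex.add_re, Complex.add_im, Complex.ofReal_re,
    Complex.ofReal_im, Complex.I_re, Complex.I_im, Complex.one_re, Complex.one_im]
  field_simp
  ring

noncomputable def cosRemainder (u : ℝ) : ℝ := cos u - 1 + u ^ 2 / 2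

lemma cosRemainder_abs (u : ℝ) : cosRemainder |u| = cosRemainder u := by
  simp [cosRemainder, cos_abs]

lemma sin_pow_four_mul_cos (x y : ℝ) : sin x ^ 4 * cos y =
    (6 * cosRemainder y - 4 * cosRemainder (2 * x + y) - 4 * cosRemainder (2 * x - y)
      + cosRemainder (4 * x + y) + cosRemainder (4 * x - y)) / 16 := by
  simp only [cosRemainder]
  rw [cos_add, cos_sub, cos_add, cos_sub, show (4:ℝ) * x = 2 * (2 * x) by ring, cos_two_mul,
    sin_two_mul, cos_two_mul, sin_two_mul, cos_two_mul, sin_two_mul]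
  linear_combination (cos y * (sin x ^ 2 + 1 - cos x ^ 2)) * sin_sq_add_cos_sq x

lemma cosRemainder_nonneg (u : ℝ) : 0 ≤ cosRemainder u := by
  unfold cosRemainder
  linarith [one_sub_sq_div_two_le_cos (x := u)]

lemma continuous_cosRemainder : Continuous cosRemainder := by
  unfold cosRemainder
  fun_prop

-- Each term is a Gamma moment `u ^ k * exp (-(s * u))` or the Laplace transform of `cos`.
lemma exp_neg_mul_mul_cosRemainder (s u : ℝ) : exp (-(s * u)) * cosRemainder u =
    exp (-(s * u)) * cos u - u ^ 0 * exp (-(s * u)) + 2⁻¹ * (u ^ 2 * exp (-(s * u))) := by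
  unfold cosRemainder
  ring

lemma integral_exp_neg_mul_mul_cosRemainder {s : ℝ} (hs : 0 < s) :
    ∫ u in Ioi 0, exp (-(s * u)) * cosRemainder u = 1 / (s ^ 3 * (s ^ 2 + 1)) := by
  have hcos := integrableOn_exp_neg_mul_mul_cos hs
  have hexp := integrableOn_pow_mul_exp_neg_mul_Ioi 0 hs
  have hsq := (integrableOn_pow_mul_exp_neg_mul_Ioi 2 hs).const_mul 2⁻¹
  have hdiff : IntegrableOn (fun u => exp (-(s * u)) * cos u - u ^ 0 * exp (-(s * u))) (Ioi 0) :=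
    hcos.sub hexp
  simp_rw [exp_neg_mul_mul_cosRemainder]
  rw [integral_add hdiff hsq, integral_sub hcos hexp, integral_const_mul,
    integral_exp_neg_mul_mul_cos hs, integral_pow_mul_exp_neg_mul_Ioi 0 hs,
    integral_pow_mul_exp_neg_mul_Ioi 2 hs, Nat.factorial_zero, Nat.factorial_two]
  field_simp
  ring

lemma integrableOn_exp_neg_mul_mul_cosRemainder {s : ℝ} (hs : 0 < s) :
    IntegrableOn (fun u => exp (-(s * u)) * cosRemainder u) (Ioi 0) :=
  Integrable.of_integral_ne_zero <| by
    rw [integral_exp_neg_mul_mul_cosRemainder hs]; positivity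

lemma integral_cosRemainder_div_pow_four :
    IntegrableOn (fun u => cosRemainder u / u ^ 4) (Ioi 0) ∧
      ∫ u in Ioi 0, cosRemainder u / u ^ 4 = π / 12 := by
  have hL : EqOn (fun s => s ^ 3 * ∫ u in Ioi 0, exp (-(s * u)) * cosRemainder u)
      (fun s => (1 + s ^ 2)⁻¹) (Ioi 0) := by
    intro s (hs : 0 < s)
    simp only [integral_exp_neg_mul_mul_cosRemainder hs]
    field_simp
    ring
  have hI := integrable_inv_one_add_sq.integrableOn.congr_fun hL.symm measurableSet_Ioi
  obtain ⟨hint, hval⟩ := integral_div_pow_succ_eq_integral_laplace 3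
    continuous_cosRemainder.measurable (fun u _ => cosRemainder_nonneg u)
    (fun s hs => integrableOn_exp_neg_mul_mul_cosRemainder hs) hI
  refine ⟨hint, ?_⟩
  rw [hval, setIntegral_congr_fun measurableSet_Ioi hL, integral_Ioi_inv_one_add_sq, arctan_zero,
    sub_zero, show (3 ! : ℝ) = 6 by norm_num [Nat.factorial]]
  ring

lemma integral_cosRemainder_mul_div_pow_four (w : ℝ) :
    IntegrableOn (fun t => cosRemainder (w * t) / t ^ 4) (Ioi 0) ∧
      ∫ t in Ioi 0, cosRemainder (w * t) / t ^ 4 = π / 12 * |w| ^ 3 := by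
  have habs : EqOn (fun t => cosRemainder (w * t) / t ^ 4)
      (fun t => cosRemainder (|w| * t) / t ^ 4) (Ioi 0) := by
    intro t (ht : 0 < t)
    simp only [← cosRemainder_abs (w * t), abs_mul, abs_of_pos ht]
  rw [setIntegral_congr_fun measurableSet_Ioi habs, integrableOn_congr_fun habs measurableSet_Ioi]
  rcases (abs_nonneg w).eq_or_lt with hw | hw
  · simp [← hw, cosRemainder]
  obtain ⟨hint, hval⟩ := integral_cosRemainder_div_pow_four
  have hscale : EqOn (fun t => cosRemainder (|w| * t) / t ^ 4)
      (fun t => |w| ^ 4 * (cosRemainder (|w| * t) / (|w| * t) ^ 4)) (Ioi 0) := by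
    intro t (ht : 0 < t)
    have := ht.ne'
    field_simp
  have hint_scaled : IntegrableOn (fun t => cosRemainder (|w| * t) / (|w| * t) ^ 4) (Ioi 0) :=
    (integrableOn_Ioi_comp_mul_left_iff (fun u => cosRemainder u / u ^ 4) 0 hw).2
      (by rwa [mul_zero])
  refine ⟨IntegrableOn.congr_fun (hint_scaled.const_mul _) hscale.symm measurableSet_Ioi, ?_⟩
  rw [setIntegral_congr_fun measurableSet_Ioi hscale, integral_const_mul,
    integral_comp_mul_left_Ioi (fun u => cosRemainder u / u ^ 4) 0 hw, mul_zero, hval,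
    smul_eq_mul]
  field_simp

lemma integral_sum_cosRemainder_div_pow_four {ι : Type*} (s : Finset ι) (c w : ι → ℝ) :
    ∫ t in Ioi 0, (∑ i ∈ s, c i * cosRemainder (w i * t)) / t ^ 4 =
      π / 12 * ∑ i ∈ s, c i * |w i| ^ 3 := by
  simp_rw [Finset.sum_div, mul_div_assoc]
  rw [integral_finsetSum s fun i _ => (integral_cosRemainder_mul_div_pow_four (w i)).1.const_mul _,
    Finset.mul_sum]
  refine Finset.sum_congr rfl fun i _ => ?_
  rw [integral_const_mul, (integral_cosRemainder_mul_div_pow_four (w i)).2]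
  ring

theorem stmt_0 (lam : ℝ) (hlam : 0 < lam) (v : ℝ) (hv : |v| ≤ lam / 2) :
    (3 / (4 * π)) * ∫ t in Set.Ioi (0:ℝ),
        (Real.sin (lam * t / 4)) ^ 4 / (lam ^ 3 * (t / 4) ^ 4) * Real.cos (v * t)
      = 1 - 6 * (v / lam) ^ 2 + 6 * (|v| / lam) ^ 3 := by
  set c : Fin 5 → ℝ := ![6, -4, -4, 1, 1]
  set w : Fin 5 → ℝ := ![v, lam / 2 + v, lam / 2 - v, lam + v, lam - v]
  have hintegrand : EqOn
      (fun t => sin (lam * t / 4) ^ 4 / (lam ^ 3 * (t / 4) ^ 4) * cos (v * t))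
      (fun t => 16 / lam ^ 3 * ((∑ i, c i * cosRemainder (w i * t)) / t ^ 4)) (Ioi 0) := by
    intro t (ht : 0 < t)
    have := ht.ne'
    simp only [Fin.sum_univ_five, c, w, Matrix.cons_val]
    rw [show (lam / 2 + v) * t = 2 * (lam * t / 4) + v * t by ring,
      show (lam / 2 - v) * t = 2 * (lam * t / 4) - v * t by ring,
      show (lam + v) * t = 4 * (lam * t / 4) + v * t by ring,
      show (lam - v) * t = 4 * (lam * t / 4) - v * t by ring, div_mul_eq_mul_div,
      sin_pow_four_mul_cos]
    field_simp
    ring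
  obtain ⟨hv₁, hv₂⟩ := abs_le.1 hv
  rw [setIntegral_congr_fun measurableSet_Ioi hintegrand, integral_const_mul,
    integral_sum_cosRemainder_div_pow_four, Fin.sum_univ_five]
  simp only [c, w, Matrix.cons_val]
  rw [abs_of_nonneg (by linarith : 0 ≤ lam / 2 + v), abs_of_nonneg (by linarith : 0 ≤ lam / 2 - v),
    abs_of_nonneg (by linarith : 0 ≤ lam + v), abs_of_nonneg (by linarith : 0 ≤ lam - v)]
  field_simp
  ring
end

section
/- For all real ν with λ/2 ≤ |ν| ≤ λ (where λ > 0), one has (3/(4π)) ∫₀^∞ (sin⁴(λt/4)/(λ³(t/4)⁴)) cos(νt) dt = 2(1 - |ν|/λ)³, and for |ν| ≥ λ the integral equals 0. -/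
/-!
The cubic B-spline `cubicBSpline x = (4 - |x|)₊³ / 48 - (2 - |x|)₊³ / 12` is one eighth of the
fourfold convolution power of the indicator of `[-1, 1]`, so its Fourier transform is
`2 (sin c / c)⁴` with `c = 2πξ`; this is verified directly by integrating the truncated cubes
against cosines. Fourier inversion gives `∫ sin⁴ u / u⁴ · cos (x u) du = π · cubicBSpline x`, and the
substitution `u = λt/4` turns the Jackson integral into `2π · cubicBSpline (4ν/λ)`. The spline
equals `(4 - |x|)³ / 48` for `2 ≤ |x| ≤ 4` and vanishes for `|x| ≥ 4`.
-/

open Real MeasureTheory Set FourierTransform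

lemma sin_pow_four_eq (x : ℝ) : sin x ^ 4 = 3 / 8 - cos (2 * x) / 2 + cos (4 * x) / 8 := by
  have h4 : cos (4 * x) = 2 * cos (2 * x) ^ 2 - 1 := by
    rw [show 4 * x = 2 * (2 * x) by ring, cos_two_mul]
  rw [show sin x ^ 4 = (sin x ^ 2) ^ 2 by ring, sin_sq_eq_half_sub, h4]
  ring

lemma integral_eq_two_mul_integral_Ioi_of_even {f : ℝ → ℝ} (hf : ∀ x, f (-x) = f x) :
    ∫ x, f x = 2 * ∫ x in Ioi 0, f x := by
  have hf_abs (x : ℝ) : f |x| = f x := by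
    rcases abs_choice x with h | h <;> simp [h, hf]
  simpa only [hf_abs] using integral_comp_abs (f := f)

theorem fourier_ofReal_eq_integral_mul_cos {f : ℝ → ℝ} (hf : Integrable f)
    (heven : ∀ x, f (-x) = f x) (w : ℝ) :
    𝓕 (fun x => (f x : ℂ)) w = ↑(∫ x, f x * cos (2 * π * x * w)) := by
  have hcos : Integrable fun x => f x * cos (2 * π * x * w) :=
    hf.mul_bdd (by fun_prop) (ae_of_all _ fun x => by simpa using abs_cos_le_one _)
  have hsin : Integrable fun x => f x * sin (2 * π * x * w) :=
    hf.mul_bdd (by fun_prop) (ae_of_all _ fun x => by simpa using abs_sin_le_one _)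
  have hsin_zero : ∫ x, f x * sin (2 * π * x * w) = 0 := by
    have := integral_neg_eq_self (fun x => f x * sin (2 * π * x * w)) volume
    simp only [heven, mul_neg, neg_mul, sin_neg, integral_neg] at this
    linarith
  rw [Real.fourier_real_eq_integral_exp_smul]
  calc _ = ∫ x, ((f x * cos (2 * π * x * w) : ℝ) : ℂ)
        - ((f x * sin (2 * π * x * w) : ℝ) : ℂ) * Complex.I := by
        congr 1 with x
        rw [smul_eq_mul, Complex.exp_mul_I, neg_mul, neg_mul, neg_mul, Complex.ofReal_neg,
          Complex.cos_neg, Complex.sin_neg]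
        push_cast
        ring
    _ = _ := by
        rw [integral_sub hcos.ofReal (hsin.ofReal.mul_const _), integral_mul_const,
          integral_complex_ofReal, integral_complex_ofReal, hsin_zero]
        simp

lemma hasDerivAt_antideriv_sub_pow_three_mul_cos (r : ℝ) {a : ℝ} (ha : a ≠ 0) (x : ℝ) :
    HasDerivAt (fun x => (r - x) ^ 3 * sin (a * x) / a - 3 * (r - x) ^ 2 * cos (a * x) / a ^ 2
      - 6 * (r - x) * sin (a * x) / a ^ 3 + 6 * cos (a * x) / a ^ 4)
      ((r - x) ^ 3 * cos (a * x)) x := by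
  have hs : HasDerivAt (fun x => sin (a * x)) (cos (a * x) * a) x := by
    simpa using ((hasDerivAt_id x).const_mul a).sin
  have hc : HasDerivAt (fun x => cos (a * x)) (-sin (a * x) * a) x := by
    simpa using ((hasDerivAt_id x).const_mul a).cos
  have hp (n : ℕ) : HasDerivAt (fun x => (r - x) ^ n) (-(n * (r - x) ^ (n - 1))) x := by
    simpa using ((hasDerivAt_id x).const_sub r).fun_pow n
  have hp₁ : HasDerivAt (fun x => r - x) (-1) x := by
    simpa using (hasDerivAt_id x).const_sub r
  have H := ((((hp 3).mul hs).div_const a).sub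
    ((((hp 2).const_mul 3).mul hc).div_const (a ^ 2))).sub
    (((hp₁.const_mul 6).mul hs).div_const (a ^ 3)) |>.add ((hc.const_mul 6).div_const (a ^ 4))
  refine H.congr_deriv ?_
  field_simp
  norm_num
  ring

lemma integral_sub_pow_three_mul_cos (r : ℝ) {a : ℝ} (ha : a ≠ 0) :
    ∫ x in (0 : ℝ)..r, (r - x) ^ 3 * cos (a * x)
      = (3 * a ^ 2 * r ^ 2 + 6 * cos (a * r) - 6) / a ^ 4 := by
  rw [intervalIntegral.integral_eq_sub_of_hasDerivAt
    (fun x _ => hasDerivAt_antideriv_sub_pow_three_mul_cos r ha x)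
    (Continuous.intervalIntegrable (by fun_prop) _ _)]
  simp only [sub_zero, mul_zero, sin_zero, cos_zero]
  field_simp
  ring

noncomputable def truncCube (r x : ℝ) : ℝ := max (r - |x|) 0 ^ 3

lemma truncCube_of_le_abs {r x : ℝ} (h : r ≤ |x|) : truncCube r x = 0 := by
  simp [truncCube, h]

@[simp] lemma truncCube_neg (r x : ℝ) : truncCube r (-x) = truncCube r x := by
  simp [truncCube]

@[fun_prop] lemma continuous_truncCube (r : ℝ) : Continuous (truncCube r) := by
  unfold truncCube; fun_prop

lemma integrable_truncCube (r : ℝ) : Integrable (truncCube r) :=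
  (continuous_truncCube r).integrable_of_hasCompactSupport <|
    HasCompactSupport.intro (isCompact_closedBall 0 |r|) fun x hx =>
      truncCube_of_le_abs (by simp at hx; linarith [le_abs_self r])

lemma integral_truncCube_mul_cos {r : ℝ} (hr : 0 ≤ r) {a : ℝ} (ha : a ≠ 0) :
    ∫ x, truncCube r x * cos (a * x) = 2 * (3 * a ^ 2 * r ^ 2 + 6 * cos (a * r) - 6) / a ^ 4 := by
  have h_Ioc : ∫ x in Ioi 0, truncCube r x * cos (a * x)
      = ∫ x in Ioc 0 r, truncCube r x * cos (a * x) :=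
    setIntegral_eq_of_subset_of_forall_sdiff_eq_zero measurableSet_Ioi Ioc_subset_Ioi_self
      fun x hx => by
        have hrx : r ≤ |x| := (not_le.1 fun h => hx.2 ⟨hx.1, h⟩).le.trans (le_abs_self x)
        rw [truncCube_of_le_abs hrx, zero_mul]
  have h_interval : ∫ x in (0 : ℝ)..r, truncCube r x * cos (a * x)
      = ∫ x in (0 : ℝ)..r, (r - x) ^ 3 * cos (a * x) :=
    intervalIntegral.integral_congr fun x hx => by
      rw [uIcc_of_le hr] at hx
      simp [truncCube, abs_of_nonneg hx.1, hx.2]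
  rw [integral_eq_two_mul_integral_Ioi_of_even fun x => by simp, h_Ioc,
    ← intervalIntegral.integral_of_le hr, h_interval, integral_sub_pow_three_mul_cos r ha]
  ring

noncomputable def cubicBSpline (x : ℝ) : ℝ := truncCube 4 x / 48 - truncCube 2 x / 12

@[simp] lemma cubicBSpline_neg (x : ℝ) : cubicBSpline (-x) = cubicBSpline x := by
  simp [cubicBSpline]

@[fun_prop] lemma continuous_cubicBSpline : Continuous cubicBSpline := by
  unfold cubicBSpline; fun_prop

lemma integrable_cubicBSpline : Integrable cubicBSpline :=
  ((integrable_truncCube 4).div_const _).sub ((integrable_truncCube 2).div_const _)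

lemma cubicBSpline_of_four_le_abs {x : ℝ} (h : 4 ≤ |x|) : cubicBSpline x = 0 := by
  simp [cubicBSpline, truncCube_of_le_abs h, truncCube_of_le_abs (by linarith : (2 : ℝ) ≤ |x|)]

lemma cubicBSpline_of_two_le_abs {x : ℝ} (h₂ : 2 ≤ |x|) (h₄ : |x| ≤ 4) :
    cubicBSpline x = (4 - |x|) ^ 3 / 48 := by
  rw [cubicBSpline, truncCube_of_le_abs h₂, truncCube, max_eq_left (by linarith)]
  ring

lemma fourier_cubicBSpline {ξ : ℝ} (hξ : ξ ≠ 0) :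
    𝓕 (fun x => (cubicBSpline x : ℂ)) ξ
      = ((2 * (sin (2 * π * ξ) ^ 4 / (2 * π * ξ) ^ 4) : ℝ) : ℂ) := by
  set c := 2 * π * ξ with hc_def
  have hc : c ≠ 0 := by positivity
  have h_cos (x : ℝ) : cos (2 * π * x * ξ) = cos (c * x) := by rw [hc_def]; ring_nf
  have h_int (r : ℝ) : Integrable fun x => truncCube r x * cos (c * x) :=
    (integrable_truncCube r).mul_bdd (by fun_prop)
      (ae_of_all _ fun x => by simpa using abs_cos_le_one _)
  rw [fourier_ofReal_eq_integral_mul_cos integrable_cubicBSpline cubicBSpline_neg]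
  simp only [cubicBSpline, sub_mul, div_mul_eq_mul_div, h_cos]
  rw [integral_sub ((h_int 4).div_const _) ((h_int 2).div_const _), integral_div, integral_div,
    integral_truncCube_mul_cos (by norm_num) hc, integral_truncCube_mul_cos (by norm_num) hc,
    sin_pow_four_eq]
  field_simp
  ring_nf

lemma sin_pow_four_div_pow_four_le (u : ℝ) : sin u ^ 4 / u ^ 4 ≤ 2 * (1 + u ^ 2)⁻¹ := by
  rcases eq_or_ne u 0 with rfl | hu
  · norm_num
  have hs₀ : 0 ≤ sin u ^ 2 := sq_nonneg _
  have hs₁ : sin u ^ 2 ≤ 1 := sin_sq_le_one u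
  have hsu : sin u ^ 2 ≤ u ^ 2 := sin_sq_le_sq
  rw [div_le_iff₀ (by positivity), ← div_eq_mul_inv, div_mul_eq_mul_div,
    le_div_iff₀ (by positivity)]
  nlinarith [mul_le_mul hsu hsu hs₀ (sq_nonneg u), mul_le_mul_of_nonneg_left hs₁ hs₀,
    mul_le_mul_of_nonneg_right hsu hs₀]

lemma integrable_sin_pow_four_div_pow_four : Integrable fun u : ℝ => sin u ^ 4 / u ^ 4 :=
  (integrable_inv_one_add_sq.const_mul 2).mono' (Measurable.aestronglyMeasurable (by fun_prop)) <|
    ae_of_all _ fun u => by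
      rw [norm_of_nonneg (by positivity)]
      exact sin_pow_four_div_pow_four_le u

theorem integral_mul_cos_eq_of_fourier_ae_eq {f g : ℝ → ℝ} (hf : Integrable f)
    (hf_cont : Continuous f) (hg : Integrable g) (hg_even : ∀ ξ, g (-ξ) = g ξ)
    (hfg : 𝓕 (fun x => (f x : ℂ)) =ᵐ[volume] fun ξ => (g ξ : ℂ)) (x : ℝ) :
    ∫ ξ, g ξ * cos (2 * π * ξ * x) = f x := by
  have hinv := hf.ofReal.fourierInv_fourier_eq (hg.ofReal.congr hfg.symm)
    (Complex.continuous_ofReal.comp hf_cont).continuousAt (v := x)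
  rw [fourierInv_eq_fourier_neg, fourier_congr_ae hfg,
    fourier_ofReal_eq_integral_mul_cos hg hg_even] at hinv
  simpa only [mul_neg, cos_neg] using Complex.ofReal_injective hinv

theorem integral_sin_pow_four_div_mul_cos (x : ℝ) :
    ∫ u, sin u ^ 4 / u ^ 4 * cos (x * u) = π * cubicBSpline x := by
  set S : ℝ → ℝ := fun u => sin u ^ 4 / u ^ 4 * cos (x * u)
  have h2π : 0 < 2 * π := by positivity
  have hFB : 𝓕 (fun y => (cubicBSpline y : ℂ)) =ᵐ[volume]
      fun ξ => ((2 * (sin (2 * π * ξ) ^ 4 / (2 * π * ξ) ^ 4) : ℝ) : ℂ) := by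
    filter_upwards [compl_mem_ae_iff.mpr (measure_singleton 0)] with ξ hξ
    exact fourier_cubicBSpline hξ
  have hinv := integral_mul_cos_eq_of_fourier_ae_eq integrable_cubicBSpline
    continuous_cubicBSpline
    ((integrable_sin_pow_four_div_pow_four.comp_mul_left' h2π.ne').const_mul 2)
    (fun ξ => by simp [Even.neg_pow (by decide : Even 4)]) hFB x
  have h_subst : ∫ ξ, 2 * (sin (2 * π * ξ) ^ 4 / (2 * π * ξ) ^ 4) * cos (2 * π * ξ * x)
      = ∫ ξ, (fun u => 2 * S u) (2 * π * ξ) := by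
    congr 1 with ξ
    simp only [S]
    ring_nf
  rw [h_subst, Measure.integral_comp_mul_left (fun u => 2 * S u) (2 * π), integral_const_mul,
    smul_eq_mul, abs_of_pos (inv_pos.2 h2π)] at hinv
  rw [← hinv]
  field_simp

theorem integral_Ioi_sin_pow_four_div_mul_cos (x : ℝ) :
    ∫ u in Ioi 0, sin u ^ 4 / u ^ 4 * cos (x * u) = π / 2 * cubicBSpline x := by
  have := integral_eq_two_mul_integral_Ioi_of_even
    (f := fun u => sin u ^ 4 / u ^ 4 * cos (x * u))
    fun u => by simp [Even.neg_pow (by decide : Even 4)]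
  rw [integral_sin_pow_four_div_mul_cos] at this
  linarith

theorem integral_Ioi_jacksonKernel_mul_cos (lam : ℝ) (hlam : 0 < lam) (v : ℝ) :
    ∫ t in Ioi 0, sin (lam * t / 4) ^ 4 / (lam ^ 3 * (t / 4) ^ 4) * cos (v * t)
      = 2 * π * cubicBSpline (4 * v / lam) := by
  have hscale (t : ℝ) : sin (lam * t / 4) ^ 4 / (lam ^ 3 * (t / 4) ^ 4) * cos (v * t)
      = (fun u => lam * (sin u ^ 4 / u ^ 4 * cos (4 * v / lam * u))) (lam / 4 * t) := by
    rcases eq_or_ne t 0 with rfl | ht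
    · simp
    · field_simp
  simp_rw [hscale]
  rw [integral_comp_mul_left_Ioi (fun u => lam * (sin u ^ 4 / u ^ 4 * cos (4 * v / lam * u))) 0
    (by positivity), mul_zero, integral_const_mul,
    integral_Ioi_sin_pow_four_div_mul_cos, smul_eq_mul]
  field_simp
  ring

theorem stmt_1 (lam : ℝ) (hlam : 0 < lam) (v : ℝ) :
    (lam / 2 ≤ |v| → |v| ≤ lam →
      (3 / (4 * π)) * ∫ t in Set.Ioi (0:ℝ),
          (Real.sin (lam * t / 4)) ^ 4 / (lam ^ 3 * (t / 4) ^ 4) * Real.cos (v * t)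
        = 2 * (1 - |v| / lam) ^ 3) ∧
    (lam ≤ |v| →
      (3 / (4 * π)) * ∫ t in Set.Ioi (0:ℝ),
          (Real.sin (lam * t / 4)) ^ 4 / (lam ^ 3 * (t / 4) ^ 4) * Real.cos (v * t)
        = 0) := by
  have habs : |4 * v / lam| = 4 * |v| / lam := by
    rw [abs_div, abs_mul, abs_of_pos hlam, abs_of_pos (by norm_num : (0 : ℝ) < 4)]
  rw [integral_Ioi_jacksonKernel_mul_cos lam hlam v]
  constructor
  · intro h₁ h₂
    rw [cubicBSpline_of_two_le_abs (by rw [habs, le_div_iff₀ hlam]; linarith)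
      (by rw [habs, div_le_iff₀ hlam]; linarith), habs]
    field_simp
    ring
  · intro h
    rw [cubicBSpline_of_four_le_abs (by rw [habs, le_div_iff₀ hlam]; linarith)]
    ring
end

section
/- Let a, b, c be real constants. The function φ(y,v) = (|y|+1)^{-a} (|v|+1)^{-b} (|y+v|+1)^{-c} is integrable over ℝ² if and only if a+b > 1, a+c > 1, b+c > 1, and a+b+c > 2. -/
/-!
Write `⟨x⟩ = |x| + 1`. By Peetre's inequality `⟨x + y⟩ ≤ ⟨x⟩⟨y⟩`, each of `⟨y⟩`, `⟨v⟩`, `⟨y + v⟩`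
is at most the product of the other two; and the measure-preserving maps `(y, v) ↦ (v, y)` and
`(y, v) ↦ (y + v, -v)` permute the three exponents, so each condition need only be treated once.

Sufficiency: where `⟨y + v⟩` is the largest bracket, its decay can be shared out between the other
two so that both get an exponent `> 1`; hence `φ` is dominated by a sum of three products
`⟨·⟩^(-p) ⟨·⟩^(-q)` with `p, q > 1`, each integrable by Fubini.

Necessity: for fixed `y` the slice `v ↦ φ (y, v)` is comparable to `⟨v⟩^(-(b + c))`, which is
integrable only if `b + c > 1`. On the region `1 ≤ y ≤ v ≤ 2y` all three brackets are comparable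
to `y`, so the integral of the slice is at least a constant times `y ^ (1 - (a + b + c))`, which is
not integrable on `(1, ∞)` unless `a + b + c > 2`.
-/

open MeasureTheory Set Real

namespace PeetreWeight

def bracket (x : ℝ) : ℝ := |x| + 1

lemma one_le_bracket (x : ℝ) : 1 ≤ bracket x := le_add_of_nonneg_left (abs_nonneg x)

lemma bracket_pos (x : ℝ) : 0 < bracket x := one_pos.trans_le (one_le_bracket x)

lemma bracket_neg (x : ℝ) : bracket (-x) = bracket x := by rw [bracket, bracket, abs_neg]

lemma bracket_add_le (x y : ℝ) : bracket (x + y) ≤ bracket x * bracket y := by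
  unfold bracket
  nlinarith [abs_add_le x y, abs_nonneg x, abs_nonneg y]

lemma bracket_le_mul_bracket_add (x y : ℝ) : bracket y ≤ bracket x * bracket (x + y) := by
  simpa [bracket_neg] using bracket_add_le (-x) (x + y)

@[fun_prop]
lemma measurable_bracket : Measurable bracket := by unfold bracket; fun_prop

lemma rpow_neg_le_mul_rpow_neg {A B M : ℝ} (t : ℝ) (hA : 0 < A) (hB : 0 < B)
    (hAB : A ≤ M * B) (hBA : B ≤ M * A) : A ^ (-t) ≤ M ^ |t| * B ^ (-t) := by
  have hM : 0 < M := pos_of_mul_pos_left (hA.trans_le hAB) hB.le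
  rcases le_or_gt 0 t with ht | ht
  · calc A ^ (-t) = M ^ t * (M * A) ^ (-t) := by
          rw [mul_rpow hM.le hA.le, ← mul_assoc, ← rpow_add hM, add_neg_cancel, rpow_zero,
            one_mul]
      _ ≤ M ^ |t| * B ^ (-t) := by
          rw [abs_of_nonneg ht]
          exact mul_le_mul_of_nonneg_left (rpow_le_rpow_of_nonpos hB hBA (by linarith))
            (by positivity)
  · rw [abs_of_neg ht, ← mul_rpow hM.le hB.le]
    exact rpow_le_rpow hA.le hAB (by linarith)

lemma integrable_bracket_rpow_neg_iff {s : ℝ} :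
    Integrable (fun x => bracket x ^ (-s)) ↔ 1 < s := by
  refine ⟨fun h => ?_, fun hs => ?_⟩
  · have hbound : ∀ x ∈ Ioi (1 : ℝ), ‖x ^ (-s)‖ ≤ 2 ^ |s| * bracket x ^ (-s) := by
      intro x (hx : 1 < x)
      have hx0 : 0 < x := one_pos.trans hx
      rw [norm_of_nonneg (rpow_nonneg hx0.le _)]
      refine rpow_neg_le_mul_rpow_neg s hx0 (bracket_pos x) ?_ ?_ <;>
        · unfold bracket; rw [abs_of_pos hx0]; linarith
    have hint : IntegrableOn (fun x : ℝ => x ^ (-s)) (Ioi 1) :=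
      ((h.const_mul _).integrableOn).mono' (by fun_prop)
        ((ae_restrict_iff' measurableSet_Ioi).2 (ae_of_all _ hbound))
    have := (integrableOn_Ioi_rpow_iff one_pos).1 hint
    linarith
  · have := integrable_one_add_norm (E := ℝ) (μ := volume) (r := s) (by simpa using hs)
    simpa [bracket, add_comm] using this

noncomputable def triWeight (a b c : ℝ) (z : ℝ × ℝ) : ℝ :=
  bracket z.1 ^ (-a) * bracket z.2 ^ (-b) * bracket (z.1 + z.2) ^ (-c)

lemma triWeight_nonneg (a b c : ℝ) (z : ℝ × ℝ) : 0 ≤ triWeight a b c z := by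
  unfold triWeight
  have := bracket_pos z.1; have := bracket_pos z.2; have := bracket_pos (z.1 + z.2)
  positivity

lemma measurable_triWeight (a b c : ℝ) : Measurable (triWeight a b c) := by
  unfold triWeight; fun_prop

lemma triWeight_comp_swap (a b c : ℝ) : triWeight a b c ∘ Prod.swap = triWeight b a c := by
  ext z
  simp only [triWeight, Function.comp_apply, Prod.fst_swap, Prod.snd_swap, add_comm z.2]
  ring

lemma triWeight_comp_flip (a b c : ℝ) :
    triWeight a b c ∘ (fun z => (z.1 + z.2, -z.2)) = triWeight c b a := by
  ext z
  simp only [triWeight, Function.comp_apply, bracket_neg, add_neg_cancel_right]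
  ring

variable {a b c : ℝ}

lemma integrable_triWeight_comm :
    Integrable (triWeight a b c) ↔ Integrable (triWeight b a c) := by
  have hswap : MeasurePreserving (Prod.swap : ℝ × ℝ → ℝ × ℝ) := by
    rw [Measure.volume_eq_prod]; exact Measure.measurePreserving_swap
  rw [← triWeight_comp_swap b a c]
  exact hswap.integrable_comp (measurable_triWeight _ _ _).aestronglyMeasurable

lemma integrable_triWeight_flip :
    Integrable (triWeight a b c) ↔ Integrable (triWeight c b a) := by
  have hflip : MeasurePreserving (fun z : ℝ × ℝ => (z.1 + z.2, -z.2)) := by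
    rw [Measure.volume_eq_prod]
    exact ((MeasurePreserving.id volume).prod (Measure.measurePreserving_neg volume)).comp
      (measurePreserving_add_prod volume volume)
  rw [← triWeight_comp_flip c b a]
  exact hflip.integrable_comp (measurable_triWeight _ _ _).aestronglyMeasurable

lemma rpow_neg_le_rpow_neg_mul_rpow_neg {A B C t c : ℝ} (hA : 0 < A) (hB : 0 < B)
    (hAC : A ≤ C) (hBC : B ≤ C) (ht : 0 ≤ t) (htc : t ≤ c) :
    C ^ (-c) ≤ A ^ (-t) * B ^ (-(c - t)) := by
  calc C ^ (-c) = C ^ (-t) * C ^ (-(c - t)) := by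
        rw [← rpow_add (hA.trans_le hAC)]; ring_nf
    _ ≤ A ^ (-t) * B ^ (-(c - t)) :=
        mul_le_mul (rpow_le_rpow_of_nonpos hA hAC (by linarith))
          (rpow_le_rpow_of_nonpos hB hBC (by linarith)) (rpow_nonneg (hB.trans_le hBC).le _)
          (by positivity)

lemma exists_rpow_bound_of_largest (hac : 1 < a + c) (hbc : 1 < b + c)
    (habc : 2 < a + b + c) :
    ∃ p q : ℝ, 1 < p ∧ 1 < q ∧ ∀ A B C : ℝ, 0 < A → 0 < B → A ≤ C → B ≤ C → C ≤ A * B →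
      A ^ (-a) * B ^ (-b) * C ^ (-c) ≤ A ^ (-p) * B ^ (-q) := by
  rcases le_or_gt c 0 with hc | hc
  · refine ⟨a + c, b + c, hac, hbc, fun A B C hA0 hB0 hAC _ hCAB => ?_⟩
    calc A ^ (-a) * B ^ (-b) * C ^ (-c) ≤ A ^ (-a) * B ^ (-b) * (A * B) ^ (-c) := by
          have := rpow_le_rpow (hA0.trans_le hAC).le hCAB (neg_nonneg.2 hc)
          gcongr
      _ = A ^ (-(a + c)) * B ^ (-(b + c)) := by
          rw [mul_rpow hA0.le hB0.le, neg_add, neg_add, rpow_add hA0, rpow_add hB0]; ring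
  · -- as `A, B ≤ C`, the factor `C ^ (-c)` hands decay `t` to `A` and `c - t` to `B`
    obtain ⟨t, hlo, hhi⟩ := exists_between (max_lt (lt_min (by linarith) (by linarith))
      (lt_min (by linarith) hc) : max (1 - a) 0 < min (b + c - 1) c)
    obtain ⟨ht₁, ht₀⟩ := max_lt_iff.1 hlo
    obtain ⟨ht₂, ht₃⟩ := lt_min_iff.1 hhi
    refine ⟨a + t, b + (c - t), by linarith, by linarith, fun A B C hA0 hB0 hAC hBC _ => ?_⟩
    calc A ^ (-a) * B ^ (-b) * C ^ (-c)
        ≤ A ^ (-a) * B ^ (-b) * (A ^ (-t) * B ^ (-(c - t))) := by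
          have := rpow_neg_le_rpow_neg_mul_rpow_neg hA0 hB0 hAC hBC ht₀.le ht₃.le
          gcongr
      _ = A ^ (-(a + t)) * B ^ (-(b + (c - t))) := by
          rw [neg_add, neg_add, rpow_add hA0, rpow_add hB0]; ring

lemma integrable_triWeight_of_one_lt (hp : 1 < a) (hq : 1 < b) : Integrable (triWeight a b 0) := by
  have h := (integrable_bracket_rpow_neg_iff.2 hp).mul_prod (integrable_bracket_rpow_neg_iff.2 hq)
  have heq : triWeight a b 0 = fun z => bracket z.1 ^ (-a) * bracket z.2 ^ (-b) := by
    ext z; simp [triWeight]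
  rwa [heq, Measure.volume_eq_prod]

lemma integrable_triWeight (hab : 1 < a + b) (hac : 1 < a + c) (hbc : 1 < b + c)
    (habc : 2 < a + b + c) : Integrable (triWeight a b c) := by
  obtain ⟨p₁, q₁, hp₁, hq₁, boundC⟩ := exists_rpow_bound_of_largest hac hbc habc
  obtain ⟨p₂, q₂, hp₂, hq₂, boundA⟩ :=
    exists_rpow_bound_of_largest (a := b) (b := c) (c := a) (by linarith) (by linarith)
      (by linarith)
  obtain ⟨p₃, q₃, hp₃, hq₃, boundB⟩ :=
    exists_rpow_bound_of_largest (a := a) (b := c) (c := b) hab (by linarith) (by linarith)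
  have hdom : Integrable (triWeight p₁ q₁ 0 + triWeight 0 p₂ q₂ + triWeight p₃ 0 q₃) := by
    refine ((integrable_triWeight_of_one_lt hp₁ hq₁).add ?_).add ?_
    · exact integrable_triWeight_flip.2 (integrable_triWeight_of_one_lt hq₂ hp₂)
    · exact integrable_triWeight_flip.2 (integrable_triWeight_comm.2
        (integrable_triWeight_flip.2 (integrable_triWeight_of_one_lt hp₃ hq₃)))
  refine hdom.mono' (measurable_triWeight a b c).aestronglyMeasurable (ae_of_all _ fun z => ?_)
  rw [norm_of_nonneg (triWeight_nonneg a b c z)]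
  have h₁ := triWeight_nonneg p₁ q₁ 0 z
  have h₂ := triWeight_nonneg 0 p₂ q₂ z
  have h₃ := triWeight_nonneg p₃ 0 q₃ z
  simp only [Pi.add_apply, triWeight, neg_zero, rpow_zero, mul_one, one_mul] at h₁ h₂ h₃ ⊢
  have hA := bracket_pos z.1
  have hB := bracket_pos z.2
  have hC := bracket_pos (z.1 + z.2)
  have hCAB := bracket_add_le z.1 z.2
  have hBAC := bracket_le_mul_bracket_add z.1 z.2
  have hABC : bracket z.1 ≤ bracket z.2 * bracket (z.1 + z.2) := by
    simpa [add_comm] using bracket_le_mul_bracket_add z.2 z.1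
  rcases le_total (bracket z.1) (bracket (z.1 + z.2)) with hAC | hCA <;>
  rcases le_total (bracket z.2) (bracket (z.1 + z.2)) with hBC | hCB
  · linarith [boundC _ _ _ hA hB hAC hBC hCAB]
  · linarith [boundB _ _ _ hA hC (hAC.trans hCB) hCB hBAC]
  · linarith [boundA _ _ _ hB hC (hBC.trans hCA) hCA hABC]
  · rcases le_total (bracket z.1) (bracket z.2) with hAB | hBA
    · linarith [boundB _ _ _ hA hC hAB hCB hBAC]
    · linarith [boundA _ _ _ hB hC hBA hCA hABC]

lemma one_lt_add_of_integrable_triWeight (h : Integrable (triWeight a b c)) : 1 < b + c := by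
  rw [Measure.volume_eq_prod] at h
  obtain ⟨u, hu⟩ := h.prod_right_ae.exists
  refine integrable_bracket_rpow_neg_iff.1 ((hu.const_mul (bracket u ^ a * bracket u ^ |c|)).mono'
    (measurable_bracket.pow_const _).aestronglyMeasurable (ae_of_all _ fun v => ?_))
  have hc : bracket v ^ (-c) ≤ bracket u ^ |c| * bracket (u + v) ^ (-c) :=
    rpow_neg_le_mul_rpow_neg c (bracket_pos v) (bracket_pos (u + v))
      (bracket_le_mul_bracket_add u v) (bracket_add_le u v)
  have hu1 : bracket u ^ a * bracket u ^ (-a) = 1 := by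
    rw [← rpow_add (bracket_pos u), add_neg_cancel, rpow_zero]
  rw [norm_of_nonneg (rpow_nonneg (bracket_pos v).le _)]
  calc bracket v ^ (-(b + c)) = bracket v ^ (-b) * bracket v ^ (-c) := by
        rw [neg_add, rpow_add (bracket_pos v)]
    _ ≤ bracket v ^ (-b) * (bracket u ^ |c| * bracket (u + v) ^ (-c)) :=
        mul_le_mul_of_nonneg_left hc (rpow_nonneg (bracket_pos v).le _)
    _ = bracket u ^ a * bracket u ^ |c| * triWeight a b c (u, v) := by
        simp only [triWeight]
        linear_combination
          (-(bracket v ^ (-b) * bracket u ^ |c| * bracket (u + v) ^ (-c))) * hu1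

lemma rpow_le_triWeight {y v : ℝ} (hy : 1 ≤ y) (hyv : y ≤ v) (hvy : v ≤ 2 * y) :
    y ^ (-(a + b + c)) ≤ 4 ^ (|a| + |b| + |c|) * triWeight a b c (y, v) := by
  have hy0 : 0 < y := one_pos.trans_le hy
  have hcomp : ∀ t w : ℝ, 0 ≤ w → y ≤ w + 1 → w + 1 ≤ 4 * y →
      y ^ (-t) ≤ 4 ^ |t| * bracket w ^ (-t) := fun t w hw h₁ h₂ =>
    rpow_neg_le_mul_rpow_neg t hy0 (bracket_pos w)
      (by rw [bracket, abs_of_nonneg hw]; linarith) (by rw [bracket, abs_of_nonneg hw]; linarith)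
  have ha := hcomp a y hy0.le (by linarith) (by linarith)
  have hb := hcomp b v (by linarith) (by linarith) (by linarith)
  have hc := hcomp c (y + v) (by linarith) (by linarith) (by linarith)
  calc y ^ (-(a + b + c)) = y ^ (-a) * y ^ (-b) * y ^ (-c) := by
        rw [neg_add, neg_add, rpow_add hy0, rpow_add hy0]
    _ ≤ 4 ^ |a| * bracket y ^ (-a) * (4 ^ |b| * bracket v ^ (-b)) *
        (4 ^ |c| * bracket (y + v) ^ (-c)) := by
        have := bracket_pos y; have := bracket_pos v
        gcongr ?_ * ?_ * ?_
    _ = 4 ^ (|a| + |b| + |c|) * triWeight a b c (y, v) := by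
        rw [rpow_add four_pos, rpow_add four_pos, triWeight]; ring

lemma rpow_le_integral_triWeight {y : ℝ} (hy : 1 ≤ y)
    (hint : Integrable (fun v => triWeight a b c (y, v))) :
    y ^ (1 - (a + b + c)) ≤ 4 ^ (|a| + |b| + |c|) * ∫ v, triWeight a b c (y, v) := by
  have hy0 : 0 < y := one_pos.trans_le hy
  calc y ^ (1 - (a + b + c)) = y ^ (-(a + b + c)) * volume.real (Icc y (2 * y)) := by
        rw [Real.volume_real_Icc_of_le (by linarith), sub_eq_add_neg, rpow_add hy0, rpow_one]
        ring
    _ ≤ ∫ v in Icc y (2 * y), 4 ^ (|a| + |b| + |c|) * triWeight a b c (y, v) :=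
        setIntegral_ge_of_const_le_real measurableSet_Icc measure_Icc_lt_top.ne
          (fun v hv => rpow_le_triWeight hy hv.1 hv.2) (hint.const_mul _).integrableOn
    _ ≤ ∫ v, 4 ^ (|a| + |b| + |c|) * triWeight a b c (y, v) :=
        setIntegral_le_integral (hint.const_mul _)
          (ae_of_all _ fun v => mul_nonneg (by positivity) (triWeight_nonneg a b c _))
    _ = 4 ^ (|a| + |b| + |c|) * ∫ v, triWeight a b c (y, v) := integral_const_mul _ _

lemma two_lt_add_of_integrable_triWeight (h : Integrable (triWeight a b c)) : 2 < a + b + c := by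
  by_contra! hs
  rw [Measure.volume_eq_prod] at h
  have hint : IntegrableOn (fun y : ℝ => y ^ (-1 : ℝ)) (Ioi 1) := by
    refine (h.integral_prod_left.const_mul (4 ^ (|a| + |b| + |c|))).integrableOn.mono'
      (by fun_prop) ((ae_restrict_iff' measurableSet_Ioi).2 ?_)
    filter_upwards [h.prod_right_ae] with y hy (hy1 : 1 < y)
    rw [norm_of_nonneg (rpow_nonneg (by linarith) _)]
    calc y ^ (-1 : ℝ) ≤ y ^ (1 - (a + b + c)) := rpow_le_rpow_of_exponent_le hy1.le (by linarith)
      _ ≤ _ := rpow_le_integral_triWeight hy1.le hy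
  exact lt_irrefl _ ((integrableOn_Ioi_rpow_iff one_pos).1 hint)

end PeetreWeight

open PeetreWeight

theorem stmt_3 (a b c : ℝ) :
    Integrable (fun p : ℝ × ℝ =>
      (|p.1| + 1) ^ (-a) * (|p.2| + 1) ^ (-b) * (|p.1 + p.2| + 1) ^ (-c))
      (volume : Measure (ℝ × ℝ)) ↔
    (a + b > 1 ∧ a + c > 1 ∧ b + c > 1 ∧ a + b + c > 2) := by
  change Integrable (triWeight a b c) ↔ _
  refine ⟨fun h => ⟨?_, ?_, ?_, two_lt_add_of_integrable_triWeight h⟩,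
    fun ⟨hab, hac, hbc, habc⟩ => integrable_triWeight hab hac hbc habc⟩
  · linarith [one_lt_add_of_integrable_triWeight (integrable_triWeight_flip.1 h)]
  · exact one_lt_add_of_integrable_triWeight (integrable_triWeight_comm.1 h)
  · exact one_lt_add_of_integrable_triWeight h
end

section
/- For every natural number r ≥ 1 and x ≥ 2, one has ψ_{2r}(x) = θ_{2r}(x) + 2θ*_{2r}(x^{1/2}) + O(x^{1/3} log² x), where the implied constant may depend on r. -/
/-!
Compare `Λ n * Λ (n + 2r)` with a model that is nonzero only when `(n, n + 2r)`
is of the shape (prime, prime), (prime², prime) or (prime, prime²); summed over `n ≤ N` the model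
is exactly `θ_{2r}(N) + 2θ*_{2r}(√N)`, except that the `q² - 2r` part runs up to `√(N + 2r)`.
In each of the three shapes the difference is `λ (log (n + 2r) - log n)` with `λ ≤ log x`,
hence `≤ 2r log x / n`, which sums to `O(log² x)`. Every other `n` has `n` or `n + 2r` equal to
`p^k` with `k ≥ 3`, and `∑_{p^k ≤ y, k ≥ 3} log p = ∑_{k ≥ 3} θ(y^{1/k}) = O(y^{1/3} log y)`,
or has both `n` and `n + 2r` prime squares, which forces `n ≤ r²`. The primes `q` with
`N < q² ≤ N + 2r` cost another `O(r log² x)`.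
-/

open ArithmeticFunction hiding log
open Real Finset
open Classical

lemma log_sub_log_le_sub_div {a b : ℝ} (ha : 0 < a) (hab : a ≤ b) :
    log b - log a ≤ (b - a) / a := by
  rw [← log_div (by linarith) ha.ne']
  calc log (b / a) ≤ b / a - 1 := log_le_sub_one_of_pos (div_pos (by linarith) ha)
    _ = (b - a) / a := by field_simp

lemma sum_Icc_inv_le_one_add_log (N : ℕ) : ∑ n ∈ Icc 1 N, (n : ℝ)⁻¹ ≤ 1 + log N := by
  have h := harmonic_le_one_add_log N
  rw [harmonic_eq_sum_Icc] at h
  calc ∑ n ∈ Icc 1 N, (n : ℝ)⁻¹ = ((∑ n ∈ Icc 1 N, (n : ℚ)⁻¹ : ℚ) : ℝ) := by push_cast; rfl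
    _ ≤ 1 + log N := h

def IsPrimeSq (n : ℕ) : Prop := ∃ p, p.Prime ∧ p ^ 2 = n

def IsHigherPrimePow (n : ℕ) : Prop := ∃ p k, p.Prime ∧ 3 ≤ k ∧ p ^ k = n

lemma IsPrimeSq.not_prime {n : ℕ} : IsPrimeSq n → ¬ n.Prime := by
  rintro ⟨_, -, rfl⟩
  exact Nat.Prime.not_prime_pow le_rfl

lemma isHigherPrimePow_pow_iff {p k : ℕ} (hp : p.Prime) (hk : k ≠ 0) :
    IsHigherPrimePow (p ^ k) ↔ 3 ≤ k := by
  refine ⟨fun ⟨q, j, hq, hj, h⟩ => ?_, fun hk3 => ⟨p, k, hp, hk3, rfl⟩⟩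
  rw [(hq.pow_inj' hp (by omega) hk h).2] at hj
  exact hj

lemma vonMangoldt_sq_mul_log {q : ℕ} (hq : q.Prime) :
    Λ (q ^ 2) * log ((q ^ 2 : ℕ) : ℝ) = 2 * log q ^ 2 := by
  rw [vonMangoldt_apply_pow two_ne_zero, vonMangoldt_apply_prime hq, Nat.cast_pow, log_pow]
  ring

lemma isHigherPrimePow_of_vonMangoldt_ne_zero {n : ℕ} (h : Λ n ≠ 0) (h₁ : ¬ n.Prime)
    (h₂ : ¬ IsPrimeSq n) : IsHigherPrimePow n := by
  obtain ⟨p, k, hp, hk, rfl⟩ := (isPrimePow_nat_iff n).1 (vonMangoldt_ne_zero_iff.1 h)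
  refine ⟨p, k, hp, ?_, rfl⟩
  rcases (by omega : k = 1 ∨ k = 2 ∨ 3 ≤ k) with rfl | rfl | hk3
  · exact absurd (by simpa using hp) h₁
  · exact absurd ⟨p, hp, rfl⟩ h₂
  · exact hk3

noncomputable def vonMangoldtHigh (n : ℕ) : ℝ := if IsHigherPrimePow n then Λ n else 0

lemma vonMangoldtHigh_nonneg (n : ℕ) : 0 ≤ vonMangoldtHigh n := by
  unfold vonMangoldtHigh; split_ifs <;> simp

lemma vonMangoldt_eq_vonMangoldtHigh {n : ℕ} (h₁ : ¬ n.Prime) (h₂ : ¬ IsPrimeSq n) :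
    Λ n = vonMangoldtHigh n := by
  unfold vonMangoldtHigh
  split_ifs with h
  · rfl
  · by_contra hne
    exact h (isHigherPrimePow_of_vonMangoldt_ne_zero hne h₁ h₂)

lemma sum_vonMangoldtHigh_eq_sum_theta (K : ℕ) :
    ∑ n ∈ Icc 1 K, vonMangoldtHigh n
      = ∑ k ∈ Icc 1 ⌊log K / log 2⌋₊,
          if 3 ≤ k then Chebyshev.theta ((K : ℝ) ^ ((1 : ℝ) / k)) else 0 := by
  rw [show Icc 1 K = Ioc 0 K from Icc_succ_left_eq_Ioc 0 K, ← sum_filter_of_ne (p := IsPrimePow),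
    ← Nat.floor_natCast (R := ℝ) K, Chebyshev.sum_PrimePow_eq_sum_sum _ (Nat.cast_nonneg K),
    Nat.floor_natCast]
  · refine sum_congr rfl fun k hk => ?_
    have hk0 : k ≠ 0 := by have := (mem_Icc.1 hk).1; omega
    split_ifs with hk3
    · refine sum_congr rfl fun p hp => ?_
      have hp' := (mem_filter.1 hp).2
      simp [vonMangoldtHigh, isHigherPrimePow_pow_iff hp' hk0, hk3, vonMangoldt_apply_pow hk0,
        vonMangoldt_apply_prime hp']
    · refine sum_eq_zero fun p hp => ?_
      simp [vonMangoldtHigh, isHigherPrimePow_pow_iff (mem_filter.1 hp).2 hk0, hk3]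
  · exact fun n _ hn => vonMangoldt_ne_zero_iff.1 fun h => hn (by simp [vonMangoldtHigh, h])

lemma sum_vonMangoldtHigh_le (K : ℕ) :
    ∑ n ∈ Icc 1 K, vonMangoldtHigh n ≤ 2 * (K : ℝ) ^ ((1 : ℝ) / 3) * log K := by
  rcases Nat.eq_zero_or_pos K with rfl | hK
  · simp
  have hK1 : (1 : ℝ) ≤ K := by exact_mod_cast hK
  set J := ⌊log K / log 2⌋₊
  have hterm : ∀ k ∈ Icc 1 J, (if 3 ≤ k then Chebyshev.theta ((K : ℝ) ^ ((1 : ℝ) / k)) else 0)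
      ≤ log 4 * (K : ℝ) ^ ((1 : ℝ) / 3) := by
    intro k _
    split_ifs with hk
    · refine (Chebyshev.theta_le_log4_mul_x (by positivity)).trans ?_
      gcongr
      exact_mod_cast hk
    · positivity
  have hJ : (J : ℝ) * log 4 ≤ 2 * log K := by
    have hlog2 : 0 < log 2 := log_pos one_lt_two
    have : (J : ℝ) ≤ log K / log 2 := Nat.floor_le (div_nonneg (log_natCast_nonneg K) hlog2.le)
    rw [show (4 : ℝ) = 2 ^ 2 by norm_num, log_pow]
    calc (J : ℝ) * ((2 : ℕ) * log 2) ≤ log K / log 2 * (2 * log 2) := by push_cast; gcongr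
      _ = 2 * log K := by field_simp
  calc ∑ n ∈ Icc 1 K, vonMangoldtHigh n ≤ ∑ k ∈ Icc 1 J, log 4 * (K : ℝ) ^ ((1 : ℝ) / 3) := by
        rw [sum_vonMangoldtHigh_eq_sum_theta]; exact sum_le_sum hterm
    _ = J * log 4 * (K : ℝ) ^ ((1 : ℝ) / 3) := by simp [mul_assoc]
    _ ≤ 2 * log K * (K : ℝ) ^ ((1 : ℝ) / 3) := by gcongr
    _ = _ := by ring

lemma le_sq_of_isPrimeSq_of_isPrimeSq_add {r n : ℕ} (hr : 1 ≤ r) (hn : IsPrimeSq n)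
    (hn' : IsPrimeSq (n + 2 * r)) : n ≤ r ^ 2 := by
  obtain ⟨p, -, rfl⟩ := hn
  obtain ⟨q, -, hq⟩ := hn'
  have hpq : p < q := by
    by_contra! h
    nlinarith [Nat.pow_le_pow_left h 2]
  have : (p + 1) ^ 2 ≤ q ^ 2 := Nat.pow_le_pow_left hpq 2
  nlinarith

noncomputable def twinModel (r n : ℕ) : ℝ :=
  (if n.Prime ∧ (n + 2 * r).Prime then log n ^ 2 else 0)
  + (if IsPrimeSq n ∧ (n + 2 * r).Prime then Λ n * log n else 0)
  + (if n.Prime ∧ IsPrimeSq (n + 2 * r) then Λ (n + 2 * r) * log (n + 2 * r : ℕ) else 0)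

lemma abs_mul_log_add_sub_log_le (r : ℕ) {n : ℕ} (hn : 1 ≤ n) {A l : ℝ} (hl : 0 ≤ l)
    (hlA : l ≤ A) :
    |l * (log (n + 2 * r : ℕ) - log n)| ≤ 2 * r * A / n := by
  have hn0 : (0 : ℝ) < n := by exact_mod_cast hn
  have hle : (n : ℝ) ≤ (n + 2 * r : ℕ) := by exact_mod_cast Nat.le_add_right n (2 * r)
  have hδ := log_sub_log_le_sub_div hn0 hle
  have hδ0 : 0 ≤ log (n + 2 * r : ℕ) - log n := sub_nonneg.2 (log_le_log hn0 hle)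
  rw [abs_of_nonneg (mul_nonneg hl hδ0)]
  calc l * (log (n + 2 * r : ℕ) - log n) ≤ A * (2 * r / n) := by
        refine mul_le_mul hlA (hδ.trans_eq ?_) hδ0 (hl.trans hlA)
        push_cast; ring
    _ = 2 * r * A / n := by ring

lemma vonMangoldt_mul_le_of_not_modelled {r n : ℕ} {A : ℝ} (hr : 1 ≤ r) (hn : 1 ≤ n)
    (hA : log (n + 2 * r : ℕ) ≤ A) (h₁ : ¬ (n.Prime ∧ (n + 2 * r).Prime))
    (h₂ : ¬ (IsPrimeSq n ∧ (n + 2 * r).Prime)) (h₃ : ¬ (n.Prime ∧ IsPrimeSq (n + 2 * r))) :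
    Λ n * Λ (n + 2 * r) ≤ A * (vonMangoldtHigh n + vonMangoldtHigh (n + 2 * r))
      + if n ≤ r ^ 2 then A ^ 2 else 0 := by
  have hn0 : (0 : ℝ) < n := by exact_mod_cast hn
  have hΛ : Λ n ≤ A := vonMangoldt_le_log.trans <| (log_le_log hn0 (by
    exact_mod_cast Nat.le_add_right n (2 * r))).trans hA
  have hΛ' : Λ (n + 2 * r) ≤ A := vonMangoldt_le_log.trans hA
  have hA0 : 0 ≤ A := vonMangoldt_nonneg.trans hΛ'
  have hH := vonMangoldtHigh_nonneg n
  have hH' := vonMangoldtHigh_nonneg (n + 2 * r)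
  have hsmall : 0 ≤ if n ≤ r ^ 2 then A ^ 2 else 0 := by split_ifs <;> positivity
  by_cases hsq : IsPrimeSq n ∧ IsPrimeSq (n + 2 * r)
  · rw [if_pos (le_sq_of_isPrimeSq_of_isPrimeSq_add hr hsq.1 hsq.2)]
    nlinarith [mul_le_mul hΛ hΛ' vonMangoldt_nonneg hA0]
  by_cases hn' : (n + 2 * r).Prime ∨ IsPrimeSq (n + 2 * r)
  · rw [vonMangoldt_eq_vonMangoldtHigh (by tauto) (by tauto)]
    nlinarith [mul_le_mul_of_nonneg_left hΛ' hH]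
  · rw [not_or] at hn'
    rw [vonMangoldt_eq_vonMangoldtHigh hn'.1 hn'.2]
    nlinarith [mul_le_mul_of_nonneg_right hΛ hH']

lemma abs_vonMangoldt_mul_sub_twinModel_le {r n : ℕ} {A : ℝ} (hr : 1 ≤ r) (hn : 1 ≤ n)
    (hA : log (n + 2 * r : ℕ) ≤ A) :
    |Λ n * Λ (n + 2 * r) - twinModel r n|
      ≤ 2 * r * A / n + A * (vonMangoldtHigh n + vonMangoldtHigh (n + 2 * r))
        + if n ≤ r ^ 2 then A ^ 2 else 0 := by
  have hn0 : (0 : ℝ) < n := by exact_mod_cast hn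
  have hlog : log n ≤ log (n + 2 * r : ℕ) :=
    log_le_log hn0 (by exact_mod_cast Nat.le_add_right n (2 * r))
  have hΛ : Λ n ≤ A := vonMangoldt_le_log.trans (hlog.trans hA)
  have hR : 0 ≤ 2 * r * A / n := by
    have := (log_natCast_nonneg n).trans (hlog.trans hA)
    positivity
  have hE : 0 ≤ A * (vonMangoldtHigh n + vonMangoldtHigh (n + 2 * r))
      + if n ≤ r ^ 2 then A ^ 2 else 0 := by
    have := vonMangoldtHigh_nonneg n
    have := vonMangoldtHigh_nonneg (n + 2 * r)
    have := vonMangoldt_nonneg.trans hΛ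
    split_ifs <;> positivity
  by_cases h₁ : n.Prime ∧ (n + 2 * r).Prime
  · have h₂ : ¬ IsPrimeSq n := fun h => h.not_prime h₁.1
    have h₃ : ¬ IsPrimeSq (n + 2 * r) := fun h => h.not_prime h₁.2
    simp only [twinModel, h₁, h₂, h₃, and_self, and_false, false_and, if_true, if_false, add_zero]
    rw [vonMangoldt_apply_prime h₁.1, vonMangoldt_apply_prime h₁.2, show
      log n * log (n + 2 * r : ℕ) - log n ^ 2
        = log n * (log (n + 2 * r : ℕ) - log n) by ring]
    linarith [abs_mul_log_add_sub_log_le r hn (log_natCast_nonneg n) (hlog.trans hA)]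
  by_cases h₂ : IsPrimeSq n ∧ (n + 2 * r).Prime
  · have h₃ : ¬ n.Prime := fun h => h₂.1.not_prime h
    simp only [twinModel, h₂, h₃, and_self, false_and, if_true, if_false, zero_add, add_zero]
    rw [vonMangoldt_apply_prime h₂.2, ← mul_sub]
    linarith [abs_mul_log_add_sub_log_le r hn vonMangoldt_nonneg hΛ]
  by_cases h₃ : n.Prime ∧ IsPrimeSq (n + 2 * r)
  · have h₄ : ¬ (n + 2 * r).Prime := fun h => h₃.2.not_prime h
    have h₅ : ¬ IsPrimeSq n := fun h => h.not_prime h₃.1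
    simp only [twinModel, h₃, h₄, h₅, and_self, and_false, if_true, if_false, zero_add]
    rw [vonMangoldt_apply_prime h₃.1, show
      log n * Λ (n + 2 * r) - Λ (n + 2 * r) * log (n + 2 * r : ℕ)
        = -(Λ (n + 2 * r) * (log (n + 2 * r : ℕ) - log n)) by ring, abs_neg]
    linarith [abs_mul_log_add_sub_log_le r hn vonMangoldt_nonneg (vonMangoldt_le_log.trans hA)]
  simp only [twinModel, h₁, h₂, h₃, if_false, add_zero, sub_zero]
  rw [abs_of_nonneg (mul_nonneg vonMangoldt_nonneg vonMangoldt_nonneg)]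
  linarith [vonMangoldt_mul_le_of_not_modelled hr hn hA h₁ h₂ h₃]

lemma sum_Icc_ite_isPrimeSq_add (N c : ℕ) (h : ℕ → ℝ) :
    ∑ n ∈ Icc 1 N, (if IsPrimeSq (n + c) then h n else 0)
      = ∑ q ∈ Icc 1 (Nat.sqrt (N + c)), if q.Prime ∧ c < q ^ 2 then h (q ^ 2 - c) else 0 := by
  rw [← sum_filter, ← sum_filter]
  have hsqrt : ∀ n, IsPrimeSq (n + c) → (Nat.sqrt (n + c)) ^ 2 = n + c := by
    rintro n ⟨p, -, hp⟩
    rw [← hp, Nat.sqrt_eq']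
  refine sum_nbij' (fun n => Nat.sqrt (n + c)) (fun q => q ^ 2 - c) ?_ ?_ ?_ ?_ ?_
  · simp only [mem_filter, mem_Icc, and_imp]
    rintro n hn1 hnN ⟨p, hp, hpn⟩
    rw [← hpn, Nat.sqrt_eq']
    refine ⟨⟨hp.one_lt.le, Nat.le_sqrt'.2 (by omega)⟩, hp, by omega⟩
  · simp only [mem_filter, mem_Icc, and_imp]
    intro q _ hqN hq hcq
    have := Nat.le_sqrt'.1 hqN
    refine ⟨⟨by omega, by omega⟩, ⟨q, hq, by omega⟩⟩
  · intro n hn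
    have := hsqrt n (mem_filter.1 hn).2
    omega
  · intro q hq
    simp only [mem_filter] at hq
    simp only [Nat.sub_add_cancel hq.2.2.le, Nat.sqrt_eq']
  · intro n hn
    have := hsqrt n (mem_filter.1 hn).2
    congr 1
    omega

lemma sum_ite_isPrimeSq_and_prime_add (r N : ℕ) :
    ∑ n ∈ Icc 1 N, (if IsPrimeSq n ∧ (n + 2 * r).Prime then Λ n * log n else 0)
      = 2 * ∑ q ∈ Icc 1 (Nat.sqrt N),
          if q.Prime ∧ (q ^ 2 + 2 * r).Prime then log q ^ 2 else 0 := by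
  have h := sum_Icc_ite_isPrimeSq_add N 0
    (fun n => if (n + 2 * r).Prime then Λ n * log n else 0)
  simp only [add_zero, ← ite_and, Nat.sub_zero] at h
  rw [h, mul_sum]
  refine sum_congr rfl fun q _ => ?_
  by_cases hq : q.Prime
  · by_cases hq' : (q ^ 2 + 2 * r).Prime
    · rw [if_pos ⟨⟨hq, pow_pos hq.pos 2⟩, hq'⟩, if_pos ⟨hq, hq'⟩, vonMangoldt_sq_mul_log hq]
    · simp [hq']
  · simp [hq]

noncomputable def sqSubTwinTerm (r q : ℕ) : ℝ :=
  if q.Prime ∧ (q ^ 2 - 2 * r).Prime then log q ^ 2 else 0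

lemma sum_ite_prime_and_isPrimeSq_add (r N : ℕ) :
    ∑ n ∈ Icc 1 N, (if n.Prime ∧ IsPrimeSq (n + 2 * r)
        then Λ (n + 2 * r) * log (n + 2 * r : ℕ) else 0)
      = 2 * ∑ q ∈ Icc 1 (Nat.sqrt (N + 2 * r)), sqSubTwinTerm r q := by
  have h := sum_Icc_ite_isPrimeSq_add N (2 * r)
    (fun n => if n.Prime then Λ (n + 2 * r) * log (n + 2 * r : ℕ) else 0)
  simp only [← ite_and, and_comm (a := IsPrimeSq _)] at h
  rw [h, mul_sum]
  refine sum_congr rfl fun q _ => ?_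
  unfold sqSubTwinTerm
  by_cases hq : q.Prime
  · by_cases hq' : (q ^ 2 - 2 * r).Prime
    · have hlt : 2 * r < q ^ 2 := by have := hq'.pos; omega
      rw [if_pos ⟨⟨hq, hlt⟩, hq'⟩, if_pos ⟨hq, hq'⟩, Nat.sub_add_cancel hlt.le,
        vonMangoldt_sq_mul_log hq]
    · simp [hq']
  · simp [hq]

lemma sum_Icc_add_le_of_nonneg {f : ℕ → ℝ} (hf : ∀ n, 0 ≤ f n) (N c : ℕ) :
    ∑ n ∈ Icc 1 N, f (n + c) ≤ ∑ k ∈ Icc 1 (N + c), f k := by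
  have h := sum_map (Icc 1 N) (addRightEmbedding c) f
  rw [map_add_right_Icc] at h
  rw [show ∑ n ∈ Icc 1 N, f (n + c) = ∑ k ∈ Icc (1 + c) (N + c), f k from h.symm]
  exact sum_le_sum_of_subset_of_nonneg (Icc_subset_Icc (by omega) le_rfl) fun _ _ _ => hf _

lemma sum_Icc_ite_le_le (N m : ℕ) (B : ℝ) (hB : 0 ≤ B) :
    ∑ n ∈ Icc 1 N, (if n ≤ m then B else 0) ≤ m * B := by
  rw [← sum_filter]
  calc ∑ n ∈ Icc 1 N with n ≤ m, B ≤ ∑ n ∈ Icc 1 m, B :=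
        sum_le_sum_of_subset_of_nonneg
          (fun n hn => by simp only [mem_filter, mem_Icc] at hn ⊢; omega) fun _ _ _ => hB
    _ = m * B := by simp

lemma sum_abs_vonMangoldt_mul_sub_twinModel_le {r : ℕ} (hr : 1 ≤ r) (N : ℕ) :
    ∑ n ∈ Icc 1 N, |Λ n * Λ (n + 2 * r) - twinModel r n|
      ≤ 2 * r * log (N + 2 * r : ℕ) * (1 + log N)
        + log (N + 2 * r : ℕ) * (2 * (N : ℝ) ^ ((1 : ℝ) / 3) * log N
          + 2 * ((N + 2 * r : ℕ) : ℝ) ^ ((1 : ℝ) / 3) * log (N + 2 * r : ℕ))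
        + r ^ 2 * log (N + 2 * r : ℕ) ^ 2 := by
  set A := log (N + 2 * r : ℕ)
  have hA0 : 0 ≤ A := log_natCast_nonneg _
  have hpoint : ∀ n ∈ Icc 1 N, |Λ n * Λ (n + 2 * r) - twinModel r n|
      ≤ 2 * r * A * (n : ℝ)⁻¹ + A * (vonMangoldtHigh n + vonMangoldtHigh (n + 2 * r))
        + if n ≤ r ^ 2 then A ^ 2 else 0 := by
    intro n hn
    have hn := mem_Icc.1 hn
    have hA : log (n + 2 * r : ℕ) ≤ A :=
      log_le_log (Nat.cast_pos.2 (by omega)) (by exact_mod_cast (by omega : n + 2 * r ≤ N + 2 * r))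
    exact (abs_vonMangoldt_mul_sub_twinModel_le hr hn.1 hA).trans_eq (by ring)
  refine (sum_le_sum hpoint).trans ?_
  simp only [sum_add_distrib, ← mul_sum]
  have h₁ := sum_Icc_inv_le_one_add_log N
  have h₂ := sum_vonMangoldtHigh_le N
  have h₃ := (sum_Icc_add_le_of_nonneg vonMangoldtHigh_nonneg N (2 * r)).trans
    (sum_vonMangoldtHigh_le (N + 2 * r))
  have h₄ := sum_Icc_ite_le_le N (r ^ 2) (A ^ 2) (by positivity)
  rw [Nat.cast_pow] at h₄
  gcongr

lemma Nat.sqrt_add_le_sqrt_add (N c : ℕ) : Nat.sqrt (N + c) ≤ Nat.sqrt N + c := by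
  have h := Nat.lt_succ_sqrt' N
  have hsq : (Nat.sqrt N + c + 1) ^ 2 = (Nat.sqrt N + 1) ^ 2 + c * (2 * Nat.sqrt N + 2 + c) := by
    ring
  have hc : c ≤ c * (2 * Nat.sqrt N + 2 + c) := Nat.le_mul_of_pos_right c (by omega)
  rw [Nat.succ_eq_add_one] at h
  rw [← Nat.lt_succ_iff, Nat.sqrt_lt', Nat.succ_eq_add_one, hsq]
  omega

lemma abs_sum_Icc_sqrt_add_sub_le (N c : ℕ) {g : ℕ → ℝ} {B : ℝ} (hB : 0 ≤ B)
    (hg : ∀ q ∈ Icc 1 (Nat.sqrt (N + c)), 0 ≤ g q ∧ g q ≤ B) :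
    |∑ q ∈ Icc 1 (Nat.sqrt (N + c)), g q - ∑ q ∈ Icc 1 (Nat.sqrt N), g q| ≤ c * B := by
  have hle : Nat.sqrt N ≤ Nat.sqrt (N + c) := Nat.sqrt_le_sqrt (Nat.le_add_right N c)
  have hsplit := sum_Ioc_consecutive g (Nat.zero_le _) hle
  have hIcc : ∀ M, Icc 1 M = Ioc 0 M := fun M => Icc_succ_left_eq_Ioc 0 M
  have hsub : Ioc (Nat.sqrt N) (Nat.sqrt (N + c)) ⊆ Icc 1 (Nat.sqrt (N + c)) := fun q hq => by
    simp only [mem_Ioc, mem_Icc] at hq ⊢; omega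
  rw [hIcc, hIcc, ← hsplit, add_sub_cancel_left,
    abs_of_nonneg (sum_nonneg fun q hq => (hg q (hsub hq)).1)]
  calc ∑ q ∈ Ioc (Nat.sqrt N) (Nat.sqrt (N + c)), g q
      ≤ #(Ioc (Nat.sqrt N) (Nat.sqrt (N + c))) • B :=
        sum_le_card_nsmul _ _ _ fun q hq => (hg q (hsub hq)).2
    _ ≤ c * B := by
        rw [Nat.card_Ioc, nsmul_eq_mul]
        gcongr
        have := Nat.sqrt_add_le_sqrt_add N c
        exact_mod_cast (by omega : Nat.sqrt (N + c) - Nat.sqrt N ≤ c)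

lemma abs_sum_sqSubTwinTerm_sub_le (r N : ℕ) :
    |∑ q ∈ Icc 1 (Nat.sqrt (N + 2 * r)), sqSubTwinTerm r q
        - ∑ q ∈ Icc 1 (Nat.sqrt N), sqSubTwinTerm r q|
      ≤ (2 * r : ℕ) * log (N + 2 * r : ℕ) ^ 2 := by
  refine abs_sum_Icc_sqrt_add_sub_le N (2 * r) (sq_nonneg _) fun q hq => ?_
  have hq1 : (1 : ℝ) ≤ q := by exact_mod_cast (mem_Icc.1 hq).1
  have hqA : log q ≤ log (N + 2 * r : ℕ) := log_le_log (by linarith) <| by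
    exact_mod_cast (mem_Icc.1 hq).2.trans (Nat.sqrt_le_self _)
  have := log_nonneg hq1
  unfold sqSubTwinTerm
  split_ifs
  · exact ⟨by positivity, pow_le_pow_left₀ this hqA 2⟩
  · exact ⟨le_rfl, sq_nonneg _⟩

lemma sum_twin_sub_eq (r N : ℕ) :
    (∑ n ∈ Icc 1 N, Λ n * Λ (n + 2 * r))
      - (∑ p ∈ Icc 1 N, if p.Prime ∧ (p + 2 * r).Prime then log p ^ 2 else 0)
      - 2 * ∑ q ∈ Icc 1 (Nat.sqrt N), (if q.Prime then
          ((if (q ^ 2 + 2 * r).Prime then (1 : ℝ) else 0)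
            + (if (q ^ 2 - 2 * r).Prime then (1 : ℝ) else 0)) * log q ^ 2 else 0)
    = ∑ n ∈ Icc 1 N, (Λ n * Λ (n + 2 * r) - twinModel r n)
      + 2 * (∑ q ∈ Icc 1 (Nat.sqrt (N + 2 * r)), sqSubTwinTerm r q
        - ∑ q ∈ Icc 1 (Nat.sqrt N), sqSubTwinTerm r q) := by
  have hsplit : ∑ q ∈ Icc 1 (Nat.sqrt N), (if q.Prime then
        ((if (q ^ 2 + 2 * r).Prime then (1 : ℝ) else 0)
          + (if (q ^ 2 - 2 * r).Prime then (1 : ℝ) else 0)) * log q ^ 2 else 0)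
      = ∑ q ∈ Icc 1 (Nat.sqrt N),
          (if q.Prime ∧ (q ^ 2 + 2 * r).Prime then log q ^ 2 else 0)
        + ∑ q ∈ Icc 1 (Nat.sqrt N), sqSubTwinTerm r q := by
    rw [← sum_add_distrib]
    refine sum_congr rfl fun q _ => ?_
    by_cases hq : q.Prime
    · simp only [sqSubTwinTerm, hq, true_and, if_true]
      split_ifs <;> ring
    · simp [sqSubTwinTerm, hq]
  have hmodel : ∑ n ∈ Icc 1 N, twinModel r n
      = (∑ p ∈ Icc 1 N, if p.Prime ∧ (p + 2 * r).Prime then log p ^ 2 else 0)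
        + 2 * (∑ q ∈ Icc 1 (Nat.sqrt N),
            if q.Prime ∧ (q ^ 2 + 2 * r).Prime then log q ^ 2 else 0)
        + 2 * ∑ q ∈ Icc 1 (Nat.sqrt (N + 2 * r)), sqSubTwinTerm r q := by
    simp only [twinModel, sum_add_distrib, sum_ite_isPrimeSq_and_prime_add,
      sum_ite_prime_and_isPrimeSq_add]
  rw [sum_sub_distrib, hmodel, hsplit]
  ring

theorem abs_sum_vonMangoldt_twin_sub_le {r : ℕ} (hr : 1 ≤ r) (N : ℕ) :
    |(∑ n ∈ Icc 1 N, Λ n * Λ (n + 2 * r))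
      - (∑ p ∈ Icc 1 N, if p.Prime ∧ (p + 2 * r).Prime then log p ^ 2 else 0)
      - 2 * ∑ q ∈ Icc 1 (Nat.sqrt N), (if q.Prime then
          ((if (q ^ 2 + 2 * r).Prime then (1 : ℝ) else 0)
            + (if (q ^ 2 - 2 * r).Prime then (1 : ℝ) else 0)) * log q ^ 2 else 0)|
    ≤ (r ^ 2 + 6 * r + 4)
        * (((N + 2 * r : ℕ) : ℝ) ^ ((1 : ℝ) / 3) * (1 + log (N + 2 * r : ℕ)) ^ 2) := by
  set A := log (N + 2 * r : ℕ)
  set t := ((N + 2 * r : ℕ) : ℝ) ^ ((1 : ℝ) / 3)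
  have hA0 : 0 ≤ A := log_natCast_nonneg _
  have ht : 1 ≤ t := one_le_rpow (by exact_mod_cast (by omega : 1 ≤ N + 2 * r)) (by norm_num)
  have hNt : (N : ℝ) ^ ((1 : ℝ) / 3) ≤ t :=
    rpow_le_rpow (Nat.cast_nonneg N) (by exact_mod_cast Nat.le_add_right N (2 * r)) (by norm_num)
  have hlogN : log N ≤ A := by
    rcases N.eq_zero_or_pos with rfl | hN
    · simpa using hA0
    · exact log_le_log (by exact_mod_cast hN) (by exact_mod_cast Nat.le_add_right N (2 * r))
  have hr0 : (0 : ℝ) ≤ r := Nat.cast_nonneg r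
  have h₁ : A * (1 + A) ≤ t * (1 + A) ^ 2 := by nlinarith
  have h₂ : A ^ 2 ≤ t * (1 + A) ^ 2 := by nlinarith
  rw [sum_twin_sub_eq]
  calc _ ≤ ∑ n ∈ Icc 1 N, |Λ n * Λ (n + 2 * r) - twinModel r n|
        + 2 * |∑ q ∈ Icc 1 (Nat.sqrt (N + 2 * r)), sqSubTwinTerm r q
          - ∑ q ∈ Icc 1 (Nat.sqrt N), sqSubTwinTerm r q| := by
        refine (abs_add_le _ _).trans ?_
        rw [abs_mul, abs_two]
        gcongr
        exact abs_sum_le_sum_abs _ _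
    _ ≤ 2 * r * A * (1 + A) + A * (2 * t * A + 2 * t * A) + r ^ 2 * A ^ 2
        + 2 * (2 * r * A ^ 2) := by
        gcongr
        · refine (sum_abs_vonMangoldt_mul_sub_twinModel_le hr N).trans ?_
          gcongr
        · exact_mod_cast abs_sum_sqSubTwinTerm_sub_le r N
    _ ≤ (r ^ 2 + 6 * r + 4) * (t * (1 + A) ^ 2) := by
        nlinarith [mul_le_mul_of_nonneg_left h₁ hr0, mul_le_mul_of_nonneg_left h₂ hr0,
          mul_le_mul_of_nonneg_left h₂ (sq_nonneg (r : ℝ))]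

lemma Real.nat_floor_sqrt_eq_nat_sqrt_floor {x : ℝ} (hx : 0 ≤ x) : ⌊√x⌋₊ = Nat.sqrt ⌊x⌋₊ := by
  refine eq_of_forall_le_iff fun q => ?_
  rw [Nat.le_floor_iff (sqrt_nonneg x), Real.le_sqrt (Nat.cast_nonneg q) hx, Nat.le_sqrt',
    Nat.le_floor_iff hx, Nat.cast_pow]

lemma rpow_third_mul_one_add_log_sq_le {r x y : ℝ} (hr : 0 ≤ r) (hx : 2 ≤ x) (hy : 1 ≤ y)
    (hyx : y ≤ (1 + r) * x) :
    y ^ ((1 : ℝ) / 3) * (1 + log y) ^ 2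
      ≤ (1 + r) * (3 + 2 * r) ^ 2 * (x ^ ((1 : ℝ) / 3) * log x ^ 2) := by
  have hlog2 : 1 ≤ 2 * log x := by
    have := Real.log_two_gt_d9
    have := log_le_log (by norm_num) hx
    linarith
  have hrpow : y ^ ((1 : ℝ) / 3) ≤ (1 + r) * x ^ ((1 : ℝ) / 3) := calc
    y ^ ((1 : ℝ) / 3) ≤ ((1 + r) * x) ^ ((1 : ℝ) / 3) := by gcongr
    _ = (1 + r) ^ ((1 : ℝ) / 3) * x ^ ((1 : ℝ) / 3) := mul_rpow (by linarith) (by linarith)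
    _ ≤ (1 + r) * x ^ ((1 : ℝ) / 3) := by
        gcongr
        exact rpow_le_self_of_one_le (by linarith) (by norm_num)
  have hlog : 1 + log y ≤ (3 + 2 * r) * log x := calc
    1 + log y ≤ 1 + (log (1 + r) + log x) := by
        rw [← log_mul (by linarith) (by linarith)]
        gcongr
    _ ≤ 1 + (r + log x) := by
        have := log_le_sub_one_of_pos (by linarith : 0 < 1 + r)
        linarith
    _ ≤ (3 + 2 * r) * log x := by nlinarith
  calc y ^ ((1 : ℝ) / 3) * (1 + log y) ^ 2
      ≤ ((1 + r) * x ^ ((1 : ℝ) / 3)) * ((3 + 2 * r) * log x) ^ 2 := by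
        gcongr
        exact add_nonneg zero_le_one (log_nonneg hy)
    _ = (1 + r) * (3 + 2 * r) ^ 2 * (x ^ ((1 : ℝ) / 3) * log x ^ 2) := by ring

theorem stmt_8 (r : ℕ) (hr : 1 ≤ r) :
    ∃ C : ℝ, ∀ x : ℝ, 2 ≤ x →
      |(∑ n ∈ Finset.Icc 1 ⌊x⌋₊, Λ n * Λ (n + 2 * r))
        - (∑ p ∈ Finset.Icc 1 ⌊x⌋₊,
            if p.Prime ∧ (p + 2 * r).Prime then (Real.log p) ^ 2 else 0)
        - 2 * (∑ q ∈ Finset.Icc 1 ⌊Real.sqrt x⌋₊,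
            if q.Prime then
              ((if (q ^ 2 + 2 * r).Prime then (1:ℝ) else 0)
                + (if (q ^ 2 - 2 * r).Prime then (1:ℝ) else 0)) * (Real.log q) ^ 2
            else 0)|
      ≤ C * x ^ ((1:ℝ)/3) * (Real.log x) ^ 2 := by
  refine ⟨(r ^ 2 + 6 * r + 4) * ((1 + r) * (3 + 2 * r) ^ 2), fun x hx => ?_⟩
  have hx0 : 0 ≤ x := by linarith
  rw [Real.nat_floor_sqrt_eq_nat_sqrt_floor hx0]
  refine (abs_sum_vonMangoldt_twin_sub_le hr ⌊x⌋₊).trans ?_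
  have hy : ((⌊x⌋₊ + 2 * r : ℕ) : ℝ) ≤ (1 + r) * x := by
    push_cast
    nlinarith [Nat.floor_le hx0, (Nat.cast_nonneg r : (0 : ℝ) ≤ r)]
  have hy1 : (1 : ℝ) ≤ ((⌊x⌋₊ + 2 * r : ℕ) : ℝ) := by exact_mod_cast (by omega : 1 ≤ ⌊x⌋₊ + 2 * r)
  exact (mul_le_mul_of_nonneg_left (rpow_third_mul_one_add_log_sq_le (Nat.cast_nonneg r) hx hy1 hy)
    (by positivity)).trans_eq (by ring)
end

section
/- For Re z > 1, Σ_k Λ²(k) k^{−z} = Σ_p (log² p) p^{−z} + Σ_p (log² p) p^{−2z} + h(z), where h(z) is holomorphic for Re z > 1/3, and consequently Σ_k Λ²(k) k^{−z} = (d/dz){ζ'(z)/ζ(z) − (1/2) ζ'(2z)/ζ(2z)} + H(z) with H holomorphic on {Re z > 1/3}. -/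
/-!
At a prime power `p ^ k`, `Λ² = log² p`. The two prime sums account for exactly these values at
`k = 1, 2`. Likewise `(ζ'/ζ)(z) - ½ (ζ'/ζ)(2z)` has derivative `L(log · Λ)(z) - L(log · Λ)(2z)`,
whose coefficient at `p ^ k` is `k log² p - [2 ∣ k] (k/2) log² p`, again `log² p` for `k = 1, 2`.
So both remainders are Dirichlet series with coefficients `O(log² n)` supported on `p ^ k`,
`k ≥ 3`. Since `∑ₚ ∑_{k ≥ 3} p^{-kσ} ≤ C ∑ₚ p^{-3σ} < ∞` for `σ > 1/3`, they converge
absolutely, hence are holomorphic, on `re z > 1/3`.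
-/

open Complex ArithmeticFunction LSeries

open scoped LSeries.notation

noncomputable section

namespace VonMangoldtSq

def vonMangoldtSq (n : ℕ) : ℂ := (Λ n : ℂ) ^ 2

def logSqOnPrimes (n : ℕ) : ℂ := if n.Prime then (Real.log n : ℂ) ^ 2 else 0

def squareDilate (a : ℕ → ℂ) : ℕ → ℂ := Function.extend (· ^ 2) a 0

def primePowAddThree (x : Nat.Primes × ℕ) : ℕ := (x.1 : ℕ) ^ (x.2 + 3)

lemma term_eq_mul_cpow_neg (a : ℕ → ℂ) (s : ℂ) {n : ℕ} (hn : n ≠ 0) :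
    term a s n = a n * (n : ℂ) ^ (-s) := by
  rw [term_of_ne_zero hn, cpow_neg, div_eq_mul_inv]

lemma one_lt_re_two_mul {w : ℂ} (hw : 1 < w.re) : 1 < (2 * w).re := by
  simp only [mul_re, re_ofNat, im_ofNat, zero_mul, sub_zero]
  linarith

lemma sq_injective : Function.Injective fun k : ℕ => k ^ 2 :=
  Nat.pow_left_injective two_ne_zero

lemma term_squareDilate (a : ℕ → ℂ) (s : ℂ) :
    term (squareDilate a) s = Function.extend (· ^ 2) (term a (2 * s)) 0 := by
  funext n
  by_cases hn : ∃ k, k ^ 2 = n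
  · obtain ⟨k, rfl⟩ := hn
    rw [squareDilate, sq_injective.extend_apply]
    rcases eq_or_ne k 0 with rfl | hk
    · simp
    rw [term_of_ne_zero (pow_ne_zero 2 hk), term_of_ne_zero hk, sq_injective.extend_apply,
      Nat.cast_pow, sq, natCast_mul_natCast_cpow, ← cpow_add _ _ (Nat.cast_ne_zero.mpr hk), two_mul]
  · have hn0 : n ≠ 0 := by rintro rfl; exact hn ⟨0, rfl⟩
    rw [term_of_ne_zero hn0, squareDilate, Function.extend_apply' _ _ _ hn,
      Function.extend_apply' _ _ _ hn, Pi.zero_apply, zero_div]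

lemma LSeriesSummable_squareDilate {a : ℕ → ℂ} {s : ℂ} (ha : LSeriesSummable a (2 * s)) :
    LSeriesSummable (squareDilate a) s := by
  rw [LSeriesSummable, term_squareDilate]
  exact (summable_extend_zero sq_injective).mpr ha

lemma LSeries_squareDilate (a : ℕ → ℂ) (s : ℂ) : L (squareDilate a) s = L a (2 * s) := by
  rw [LSeries, term_squareDilate, tsum_extend_zero sq_injective, LSeries]

lemma squareDilate_sq (a : ℕ → ℂ) (k : ℕ) : squareDilate a (k ^ 2) = a k :=
  sq_injective.extend_apply _ _ _

lemma squareDilate_of_prime (a : ℕ → ℂ) {p : ℕ} (hp : p.Prime) : squareDilate a p = 0 :=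
  Function.extend_apply' _ _ _ (fun ⟨_, hk⟩ => Nat.Prime.not_prime_pow le_rfl (hk ▸ hp))

lemma squareDilate_of_not_isPrimePow {a : ℕ → ℂ} (ha : ∀ k, ¬IsPrimePow k → a k = 0) {n : ℕ}
    (hn : ¬IsPrimePow n) : squareDilate a n = 0 := by
  by_cases h : ∃ k, k ^ 2 = n
  · obtain ⟨k, rfl⟩ := h
    exact (squareDilate_sq a k).trans (ha k fun hk => hn (hk.pow two_ne_zero))
  · exact Function.extend_apply' _ _ _ h

lemma norm_squareDilate_le {a : ℕ → ℂ} (ha : ∀ k, ‖a k‖ ≤ Real.log k ^ 2) (n : ℕ) :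
    ‖squareDilate a n‖ ≤ Real.log n ^ 2 := by
  by_cases h : ∃ k, k ^ 2 = n
  · obtain ⟨k, rfl⟩ := h
    have hk := Real.log_natCast_nonneg k
    rw [squareDilate_sq, Nat.cast_pow, Real.log_pow, Nat.cast_ofNat]
    nlinarith [ha k]
  · simpa [squareDilate, Function.extend_apply' _ _ _ h] using sq_nonneg _

lemma primePowAddThree_injective : Function.Injective primePowAddThree := by
  rintro ⟨p, j⟩ ⟨q, k⟩ h
  obtain ⟨hpq, hjk⟩ := Nat.Prime.pow_inj p.2 q.2 h
  simp only [Prod.mk.injEq]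
  exact ⟨Subtype.ext hpq, by omega⟩

lemma summable_rpow_neg_primePowAddThree {σ : ℝ} (hσ : 1 / 3 < σ) :
    Summable fun x : Nat.Primes × ℕ => (primePowAddThree x : ℝ) ^ (-σ) := by
  have hprimes : Summable fun p : Nat.Primes => (p : ℝ) ^ (-(3 * σ)) :=
    Nat.Primes.summable_rpow.mpr (by linarith)
  have hgeom : Summable fun j : ℕ => ((2 : ℝ) ^ (-σ)) ^ j :=
    summable_geometric_of_lt_one (by positivity)
      (Real.rpow_lt_one_of_one_lt_of_neg one_lt_two (by linarith))
  refine (hprimes.mul_of_nonneg hgeom (fun _ => by positivity) fun _ => by positivity)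
    |>.of_nonneg_of_le (fun _ => by positivity) ?_
  rintro ⟨p, j⟩
  have hp : (0 : ℝ) ≤ p := Nat.cast_nonneg _
  calc ((p ^ (j + 3) : ℕ) : ℝ) ^ (-σ) = (p : ℝ) ^ (-(3 * σ)) * ((p : ℝ) ^ (-σ)) ^ j := by
        rw [Nat.cast_pow, ← Real.rpow_natCast_mul hp, ← Real.rpow_mul_natCast hp,
          ← Real.rpow_add (by exact_mod_cast p.2.pos)]
        push_cast
        ring_nf
    _ ≤ (p : ℝ) ^ (-(3 * σ)) * ((2 : ℝ) ^ (-σ)) ^ j := by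
        have hp2 : (2 : ℝ) ≤ p := by exact_mod_cast p.2.two_le
        have hbase : (p : ℝ) ^ (-σ) ≤ (2 : ℝ) ^ (-σ) :=
          Real.rpow_le_rpow_of_nonpos two_pos hp2 (by linarith)
        gcongr

lemma log_sq_le_rpow (n : ℕ) {ε : ℝ} (hε : 0 < ε) : Real.log n ^ 2 ≤ (2 / ε) ^ 2 * (n : ℝ) ^ ε := by
  have hlog := Real.log_natCast_le_rpow_div n (half_pos hε)
  calc Real.log n ^ 2 ≤ ((n : ℝ) ^ (ε / 2) / (ε / 2)) ^ 2 :=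
        pow_le_pow_left₀ (Real.log_natCast_nonneg n) hlog 2
    _ = (2 / ε) ^ 2 * (n : ℝ) ^ ε := by
        rw [div_pow, ← Real.rpow_mul_natCast n.cast_nonneg]
        field_simp
        ring_nf

lemma LSeriesSummable_of_support_subset_primePowAddThree {g : ℕ → ℂ} {C : ℝ}
    (hsupp : Function.support g ⊆ Set.range primePowAddThree)
    (hg : ∀ n, ‖g n‖ ≤ C * Real.log n ^ 2) {s : ℂ} (hs : 1 / 3 < s.re) :
    LSeriesSummable g s := by
  have hC : 0 ≤ C :=
    nonneg_of_mul_nonneg_left ((norm_nonneg _).trans (hg 2)) (by positivity)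
  set ε := (s.re - 1 / 3) / 2 with hε_def
  have hε : 0 < ε := by linarith
  have hterm : ∀ n ∉ Set.range primePowAddThree, term g s n = 0 := fun n hn => by
    rw [term_def, Function.notMem_support.mp (fun h => hn (hsupp h)), zero_div, ite_self]
  rw [LSeriesSummable, ← primePowAddThree_injective.summable_iff hterm]
  refine Summable.of_norm_bounded
    ((summable_rpow_neg_primePowAddThree (σ := s.re - ε) (by linarith)).mul_left
      (C * (2 / ε) ^ 2)) fun x => ?_
  have hn : (0 : ℝ) < primePowAddThree x := by
    exact_mod_cast pow_pos x.1.2.pos _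
  rw [Function.comp_apply, norm_term_eq, if_neg (by exact_mod_cast hn.ne'),
    div_le_iff₀ (by positivity), mul_assoc, mul_assoc, ← Real.rpow_add hn,
    show -(s.re - ε) + s.re = ε by ring]
  calc ‖g (primePowAddThree x)‖ ≤ C * Real.log (primePowAddThree x) ^ 2 := hg _
    _ ≤ C * ((2 / ε) ^ 2 * (primePowAddThree x : ℝ) ^ ε) := by
        gcongr
        exact log_sq_le_rpow _ hε

lemma differentiableOn_LSeries_of_support_subset_primePowAddThree {g : ℕ → ℂ} {C : ℝ}
    (hsupp : Function.support g ⊆ Set.range primePowAddThree)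
    (hg : ∀ n, ‖g n‖ ≤ C * Real.log n ^ 2) :
    DifferentiableOn ℂ (L g) {z : ℂ | 1 / 3 < z.re} := by
  have habs : abscissaOfAbsConv g ≤ ((1 / 3 : ℝ) : EReal) :=
    abscissaOfAbsConv_le_of_forall_lt_LSeriesSummable fun y hy =>
      LSeriesSummable_of_support_subset_primePowAddThree hsupp hg (by simpa using hy)
  exact (LSeries_differentiableOn g).mono fun z hz => habs.trans_lt (by exact_mod_cast hz)

lemma support_subset_range_primePowAddThree {g : ℕ → ℂ}
    (h_not : ∀ n, ¬IsPrimePow n → g n = 0) (h_prime : ∀ p, p.Prime → g p = 0)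
    (h_sq : ∀ p, p.Prime → g (p ^ 2) = 0) : Function.support g ⊆ Set.range primePowAddThree := by
  intro n hn
  by_cases hpp : IsPrimePow n
  · obtain ⟨p, k, hp, hk, rfl⟩ := hpp
    rw [← Nat.prime_iff] at hp
    rcases k with _ | _ | _ | k
    · omega
    · exact absurd (by simpa using h_prime p hp) hn
    · exact absurd (h_sq p hp) hn
    · exact ⟨(⟨p, hp⟩, k), rfl⟩
  · exact absurd (h_not n hpp) hn

lemma LSeriesSummable_of_norm_le_log_sq {a : ℕ → ℂ} (ha : ∀ n, ‖a n‖ ≤ Real.log n ^ 2) {s : ℂ}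
    (hs : 1 < s.re) : LSeriesSummable a s := by
  have hdom : LSeriesSummable (logMul (logMul 1)) s :=
    LSeriesSummable_of_abscissaOfAbsConv_lt_re (by simp [abscissaOfAbsConv_one]; exact_mod_cast hs)
  refine Summable.of_norm_bounded hdom.norm fun n => norm_term_le s ?_
  rcases eq_or_ne n 0 with rfl | hn
  · simpa using ha 0
  simpa [logMul, ← natCast_log, sq, Real.log_natCast_nonneg, hn] using ha n

lemma vonMangoldtSq_of_not_isPrimePow {n : ℕ} (hn : ¬IsPrimePow n) : vonMangoldtSq n = 0 := by
  simp [vonMangoldtSq, vonMangoldt_eq_zero_iff.mpr hn]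

lemma vonMangoldtSq_prime_pow {p k : ℕ} (hp : p.Prime) (hk : k ≠ 0) :
    vonMangoldtSq (p ^ k) = (Real.log p : ℂ) ^ 2 := by
  rw [vonMangoldtSq, vonMangoldt_apply_pow hk, vonMangoldt_apply_prime hp]

lemma logMul_vonMangoldt_apply (n : ℕ) : logMul ↗Λ n = (Real.log n : ℂ) * Λ n := by
  rw [logMul, natCast_log]

lemma logMul_vonMangoldt_prime_pow {p k : ℕ} (hp : p.Prime) (hk : k ≠ 0) :
    logMul ↗Λ (p ^ k) = k * (Real.log p : ℂ) ^ 2 := by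
  rw [logMul_vonMangoldt_apply, vonMangoldt_apply_pow hk, vonMangoldt_apply_prime hp,
    Nat.cast_pow, Real.log_pow]
  push_cast
  ring

lemma logMul_vonMangoldt_of_not_isPrimePow {n : ℕ} (hn : ¬IsPrimePow n) : logMul ↗Λ n = 0 := by
  simp [logMul_vonMangoldt_apply, vonMangoldt_eq_zero_iff.mpr hn]

lemma logSqOnPrimes_of_not_isPrimePow {n : ℕ} (hn : ¬IsPrimePow n) : logSqOnPrimes n = 0 :=
  if_neg fun hp => hn hp.isPrimePow

lemma logSqOnPrimes_prime {p : ℕ} (hp : p.Prime) : logSqOnPrimes p = (Real.log p : ℂ) ^ 2 :=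
  if_pos hp

lemma logSqOnPrimes_sq (p : ℕ) : logSqOnPrimes (p ^ 2) = 0 :=
  if_neg (Nat.Prime.not_prime_pow le_rfl)

lemma norm_vonMangoldtSq_le (n : ℕ) : ‖vonMangoldtSq n‖ ≤ Real.log n ^ 2 := by
  rw [vonMangoldtSq, ← ofReal_pow, norm_real, Real.norm_of_nonneg (by positivity)]
  exact pow_le_pow_left₀ vonMangoldt_nonneg vonMangoldt_le_log 2

lemma norm_logSqOnPrimes_le (n : ℕ) : ‖logSqOnPrimes n‖ ≤ Real.log n ^ 2 := by
  unfold logSqOnPrimes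
  split_ifs
  · rw [← ofReal_pow, norm_real, Real.norm_of_nonneg (by positivity)]
  · simpa using sq_nonneg (Real.log n)

lemma norm_logMul_vonMangoldt_le (n : ℕ) : ‖logMul ↗Λ n‖ ≤ Real.log n ^ 2 := by
  rw [logMul_vonMangoldt_apply, ← ofReal_mul, norm_real, Real.norm_of_nonneg
    (mul_nonneg (Real.log_natCast_nonneg n) vonMangoldt_nonneg), sq]
  exact mul_le_mul_of_nonneg_left vonMangoldt_le_log (Real.log_natCast_nonneg n)

lemma LSeries_logSqOnPrimes (s : ℂ) :
    L logSqOnPrimes s = ∑' p : Nat.Primes, (Real.log p : ℂ) ^ 2 * ((p : ℕ) : ℂ) ^ (-s) := by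
  rw [LSeries, ← Nat.Primes.coe_nat_injective.tsum_eq]
  · exact tsum_congr fun p => by
      rw [term_eq_mul_cpow_neg _ _ p.2.ne_zero, logSqOnPrimes, if_pos p.2]
  · intro n hn
    by_contra hrange
    have hnp : ¬n.Prime := fun hp => hrange ⟨⟨n, hp⟩, rfl⟩
    simp [term_def, logSqOnPrimes, hnp] at hn

def primeSumRemainder : ℕ → ℂ := vonMangoldtSq - logSqOnPrimes - squareDilate logSqOnPrimes

def logDerivRemainder : ℕ → ℂ := vonMangoldtSq - logMul ↗Λ + squareDilate (logMul ↗Λ)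

lemma support_primeSumRemainder :
    Function.support primeSumRemainder ⊆ Set.range primePowAddThree := by
  refine support_subset_range_primePowAddThree (fun n hn => ?_) (fun p hp => ?_) fun p hp => ?_
  · simp [primeSumRemainder, vonMangoldtSq_of_not_isPrimePow hn,
      logSqOnPrimes_of_not_isPrimePow hn,
      squareDilate_of_not_isPrimePow (fun _ => logSqOnPrimes_of_not_isPrimePow) hn]
  · have h1 := vonMangoldtSq_prime_pow hp one_ne_zero
    rw [pow_one] at h1
    simp [primeSumRemainder, h1, logSqOnPrimes_prime hp, squareDilate_of_prime _ hp]
  · simp [primeSumRemainder, vonMangoldtSq_prime_pow hp two_ne_zero, logSqOnPrimes_sq,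
      squareDilate_sq, logSqOnPrimes_prime hp]

lemma support_logDerivRemainder :
    Function.support logDerivRemainder ⊆ Set.range primePowAddThree := by
  refine support_subset_range_primePowAddThree (fun n hn => ?_) (fun p hp => ?_) fun p hp => ?_
  · simp [logDerivRemainder, vonMangoldtSq_of_not_isPrimePow hn,
      logMul_vonMangoldt_of_not_isPrimePow hn,
      squareDilate_of_not_isPrimePow (fun _ => logMul_vonMangoldt_of_not_isPrimePow) hn]
  · have h1 := vonMangoldtSq_prime_pow hp one_ne_zero
    have h2 := logMul_vonMangoldt_prime_pow hp one_ne_zero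
    rw [pow_one] at h1 h2
    simp [logDerivRemainder, h1, h2, squareDilate_of_prime _ hp]
  · have h1 := logMul_vonMangoldt_prime_pow hp one_ne_zero
    rw [pow_one] at h1
    simp [logDerivRemainder, vonMangoldtSq_prime_pow hp two_ne_zero,
      logMul_vonMangoldt_prime_pow hp two_ne_zero, squareDilate_sq, h1]
    ring

lemma norm_primeSumRemainder_le (n : ℕ) : ‖primeSumRemainder n‖ ≤ 3 * Real.log n ^ 2 := by
  have h1 := norm_vonMangoldtSq_le n
  have h2 := norm_logSqOnPrimes_le n
  have h3 := norm_squareDilate_le norm_logSqOnPrimes_le n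
  calc ‖primeSumRemainder n‖
      ≤ ‖vonMangoldtSq n‖ + ‖logSqOnPrimes n‖ + ‖squareDilate logSqOnPrimes n‖ :=
        norm_sub_le_of_le (norm_sub_le _ _) le_rfl
    _ ≤ 3 * Real.log n ^ 2 := by linarith

lemma norm_logDerivRemainder_le (n : ℕ) : ‖logDerivRemainder n‖ ≤ 3 * Real.log n ^ 2 := by
  have h1 := norm_vonMangoldtSq_le n
  have h2 := norm_logMul_vonMangoldt_le n
  have h3 := norm_squareDilate_le norm_logMul_vonMangoldt_le n
  calc ‖logDerivRemainder n‖
      ≤ ‖vonMangoldtSq n‖ + ‖logMul ↗Λ n‖ + ‖squareDilate (logMul ↗Λ) n‖ :=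
        norm_add_le_of_le (norm_sub_le _ _) le_rfl
    _ ≤ 3 * Real.log n ^ 2 := by linarith

lemma hasDerivAt_logDeriv_riemannZeta_sub_half_comp_two_mul {z : ℂ} (hz : 1 < z.re) :
    HasDerivAt (fun w => deriv riemannZeta w / riemannZeta w
        - 1 / 2 * (deriv riemannZeta (2 * w) / riemannZeta (2 * w)))
      (L (logMul ↗Λ) z - L (logMul ↗Λ) (2 * z)) z := by
  have habs : ∀ {w : ℂ}, 1 < w.re → abscissaOfAbsConv ↗Λ < w.re := fun hw =>
    (abscissaOfAbsConv_le_of_forall_lt_LSeriesSummable (x := 1) fun _ hy =>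
      LSeriesSummable_vonMangoldt (by simpa using hy)).trans_lt (by exact_mod_cast hw)
  have hdilated := (LSeries_hasDerivAt (habs (one_lt_re_two_mul hz))).comp z
    ((hasDerivAt_id z).const_mul 2)
  have hcombined :=
    ((LSeries_hasDerivAt (habs hz)).neg.add (hdilated.const_mul (1 / 2 : ℂ))).congr_deriv
      (show _ = L (logMul ↗Λ) z - L (logMul ↗Λ) (2 * z) by ring)
  refine hcombined.congr_of_eventuallyEq ?_
  filter_upwards [(isOpen_lt continuous_const continuous_re).mem_nhds hz] with w hw
  simp only [Pi.add_apply, Pi.neg_apply, Function.comp_apply]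
  rw [LSeries_vonMangoldt_eq_deriv_riemannZeta_div hw,
    LSeries_vonMangoldt_eq_deriv_riemannZeta_div (one_lt_re_two_mul hw)]
  ring

lemma tsum_vonMangoldt_sq_mul_cpow_neg (s : ℂ) :
    ∑' k : ℕ, (Λ k : ℂ) ^ 2 * (k : ℂ) ^ (-s) = L vonMangoldtSq s := by
  refine tsum_congr fun k => ?_
  rcases eq_or_ne k 0 with rfl | hk
  · simp
  · rw [term_eq_mul_cpow_neg _ _ hk, vonMangoldtSq]

lemma LSeries_vonMangoldtSq_eq_primeSums {z : ℂ} (hz : 1 < z.re) :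
    L vonMangoldtSq z = ∑' p : Nat.Primes, (Real.log p : ℂ) ^ 2 * ((p : ℕ) : ℂ) ^ (-z)
      + ∑' p : Nat.Primes, (Real.log p : ℂ) ^ 2 * ((p : ℕ) : ℂ) ^ (-(2 * z))
      + L primeSumRemainder z := by
  have hprimes := LSeriesSummable_of_norm_le_log_sq norm_logSqOnPrimes_le hz
  have hprimeSqs := LSeriesSummable_squareDilate
    (LSeriesSummable_of_norm_le_log_sq norm_logSqOnPrimes_le (one_lt_re_two_mul hz))
  have hrem := LSeriesSummable_of_support_subset_primePowAddThree support_primeSumRemainder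
    norm_primeSumRemainder_le (s := z) (by linarith)
  have hsplit : vonMangoldtSq =
      logSqOnPrimes + squareDilate logSqOnPrimes + primeSumRemainder := by
    simp only [primeSumRemainder]
    abel
  rw [hsplit, LSeries_add (hprimes.add hprimeSqs) hrem, LSeries_add hprimes hprimeSqs,
    LSeries_squareDilate, LSeries_logSqOnPrimes, LSeries_logSqOnPrimes]

lemma LSeries_vonMangoldtSq_eq_logMul {z : ℂ} (hz : 1 < z.re) :
    L vonMangoldtSq z = L (logMul ↗Λ) z - L (logMul ↗Λ) (2 * z) + L logDerivRemainder z := by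
  have hlog := LSeriesSummable_of_norm_le_log_sq norm_logMul_vonMangoldt_le hz
  have hlogSqs := LSeriesSummable_squareDilate
    (LSeriesSummable_of_norm_le_log_sq norm_logMul_vonMangoldt_le (one_lt_re_two_mul hz))
  have hrem := LSeriesSummable_of_support_subset_primePowAddThree support_logDerivRemainder
    norm_logDerivRemainder_le (s := z) (by linarith)
  have hsplit : vonMangoldtSq =
      logMul ↗Λ - squareDilate (logMul ↗Λ) + logDerivRemainder := by
    simp only [logDerivRemainder]
    abel
  rw [hsplit, LSeries_add (hlog.sub hlogSqs) hrem, LSeries_sub hlog hlogSqs,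
    LSeries_squareDilate]

end VonMangoldtSq

end

open VonMangoldtSq

theorem stmt_18 :
    ∃ h H : ℂ → ℂ, DifferentiableOn ℂ h {z : ℂ | 1 / 3 < z.re} ∧
      DifferentiableOn ℂ H {z : ℂ | 1 / 3 < z.re} ∧
      ∀ z : ℂ, 1 < z.re →
        (∑' k : ℕ, ((Λ k : ℂ)) ^ 2 * (k : ℂ) ^ (-z)
          = (∑' p : Nat.Primes, ((Real.log p : ℂ)) ^ 2 * ((p : ℕ) : ℂ) ^ (-z))
            + (∑' p : Nat.Primes, ((Real.log p : ℂ)) ^ 2 * ((p : ℕ) : ℂ) ^ (-(2 * z)))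
            + h z) ∧
        (∑' k : ℕ, ((Λ k : ℂ)) ^ 2 * (k : ℂ) ^ (-z)
          = deriv (fun w : ℂ => deriv riemannZeta w / riemannZeta w
              - (1 / 2) * (deriv riemannZeta (2 * w) / riemannZeta (2 * w))) z
            + H z) := by
  refine ⟨L primeSumRemainder, L logDerivRemainder,
    differentiableOn_LSeries_of_support_subset_primePowAddThree support_primeSumRemainder
      norm_primeSumRemainder_le,
    differentiableOn_LSeries_of_support_subset_primePowAddThree support_logDerivRemainder
      norm_logDerivRemainder_le, fun z hz => ⟨?_, ?_⟩⟩
  · rw [tsum_vonMangoldt_sq_mul_cpow_neg, LSeries_vonMangoldtSq_eq_primeSums hz]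
  · rw [tsum_vonMangoldt_sq_mul_cpow_neg, LSeries_vonMangoldtSq_eq_logMul hz,
      (hasDerivAt_logDeriv_riemannZeta_sub_half_comp_two_mul hz).deriv]
end

section
/- If the constants C_{2r} satisfy Σ_{r=1}^m C_{2r} = m − (1/2) log m + O(log^{2/3}(m+1)), then for any continuous function E : [0,1] → ℝ, one has 2 Σ_{0 < 2r ≤ λ} E(2r/λ) C_{2r} − λ ∫₀^1 E(ν) dν = o(λ) as λ → ∞. -/
/-!
Write `S(m) = ∑_{r ≤ m} C_r`; the hypothesis gives `S(m) = m + o(m)`. For a Lipschitz weight `F`,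
Abel summation against the partial sums `S(m) - m` bounds `∑_{r ≤ x} F(r/x) (C_r - 1)` by
`(sup |F| + Lip F) · max_{m ≤ x} |S(m) - m| = o(x)`, while `∑_{r ≤ x} F(r/x) - x ∫₀¹ F = O(1)` is a
Riemann-sum estimate. A continuous `E` is uniformly within `η` of a polynomial, hence of a Lipschitz
function, and since `C_r ≥ 0` and `S(x) = O(x)` this changes the normalized error by `O(η)`.
The statement is the case `x = λ/2`.
-/

open Real Filter

open Asymptotics Finset NNReal

theorem sum_Icc_one_eq_sum_range {M : Type*} [AddCommMonoid M] (f : ℕ → M) (n : ℕ) :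
    ∑ r ∈ Icc 1 n, f r = ∑ i ∈ range n, f (i + 1) := by
  rw [← Ico_add_one_right_eq_Icc, sum_Ico_eq_sum_range, add_tsub_cancel_right]
  simp only [add_comm]

theorem abs_sum_range_mul_le {f c : ℕ → ℝ} {n : ℕ} {G : ℝ}
    (hG : ∀ k ≤ n, |∑ i ∈ range k, c i| ≤ G) :
    |∑ i ∈ range n, f i * c i|
      ≤ (|f (n - 1)| + ∑ i ∈ range (n - 1), |f (i + 1) - f i|) * G := by
  have hparts := sum_range_by_parts f c n
  simp only [smul_eq_mul] at hparts
  rw [hparts]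
  calc _ ≤ |f (n - 1)| * |∑ i ∈ range n, c i|
        + ∑ i ∈ range (n - 1), |f (i + 1) - f i| * |∑ j ∈ range (i + 1), c j| := by
        refine (abs_sub _ _).trans (add_le_add (abs_mul _ _).le ?_)
        exact (abs_sum_le_sum_abs _ _).trans_eq (by simp_rw [abs_mul])
    _ ≤ _ := by
        rw [add_mul, sum_mul]
        gcongr with i hi
        · exact hG n le_rfl
        · exact hG (i + 1) (by have := mem_range.1 hi; omega)

theorem abs_integral_sub_mul_le_of_lipschitzOnWith {F : ℝ → ℝ} {K : ℝ≥0} {s : Set ℝ} {a b : ℝ}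
    (hF : LipschitzOnWith K F s) (hab : a ≤ b) (hs : Set.Icc a b ⊆ s) :
    |(∫ t in a..b, F t) - (b - a) * F b| ≤ K * (b - a) ^ 2 := by
  have hint : IntervalIntegrable F MeasureTheory.volume a b :=
    ((hF.mono hs).continuousOn.mono (by rw [Set.uIcc_of_le hab])).intervalIntegrable
  have hbound : ∀ t ∈ Set.uIoc a b, ‖F t - F b‖ ≤ K * (b - a) := by
    intro t ht
    rw [Set.uIoc_of_le hab] at ht
    have hta : t ∈ Set.Icc a b := ⟨ht.1.le, ht.2⟩
    calc ‖F t - F b‖ ≤ K * dist t b := hF.dist_le_mul t (hs hta) b (hs ⟨hab, le_rfl⟩)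
      _ ≤ K * (b - a) := by
        rw [Real.dist_eq, abs_sub_comm, abs_of_nonneg (by linarith [ht.2])]
        gcongr
        linarith [ht.1]
  rw [← smul_eq_mul (b - a), ← intervalIntegral.integral_const,
    ← intervalIntegral.integral_sub hint intervalIntegrable_const, ← Real.norm_eq_abs]
  calc _ ≤ K * (b - a) * |b - a| := intervalIntegral.norm_integral_le_of_norm_le_const hbound
    _ = K * (b - a) ^ 2 := by rw [abs_of_nonneg (sub_nonneg.2 hab)]; ring

theorem natCast_div_mem_Icc_of_le_floor {r : ℕ} {x : ℝ} (hx : 0 < x) (hr : r ≤ ⌊x⌋₊) :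
    (r : ℝ) / x ∈ Set.Icc 0 1 :=
  ⟨by positivity, (div_le_one hx).2 ((Nat.cast_le.2 hr).trans (Nat.floor_le hx.le))⟩

theorem integral_eq_sum_add_integral_floor_div {F : ℝ → ℝ} {x : ℝ}
    (hF : ContinuousOn F (Set.Icc 0 1)) (hx : 0 < x) :
    ∫ t in 0..1, F t = ∑ i ∈ range ⌊x⌋₊, (∫ t in (i : ℝ) / x..(i + 1 : ℕ) / x, F t)
      + ∫ t in (⌊x⌋₊ : ℝ) / x..1, F t := by
  have hmem : ∀ {i}, i ≤ ⌊x⌋₊ → (i : ℝ) / x ∈ Set.Icc 0 1 := natCast_div_mem_Icc_of_le_floor hx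
  have hint : ∀ {c d}, c ∈ Set.Icc (0 : ℝ) 1 → d ∈ Set.Icc (0 : ℝ) 1 →
      IntervalIntegrable F MeasureTheory.volume c d := fun hc hd =>
    (hF.mono (Set.uIcc_subset_Icc hc hd)).intervalIntegrable
  rw [intervalIntegral.sum_integral_adjacent_intervals (a := fun i : ℕ => (i : ℝ) / x)
      (fun i hi => hint (hmem hi.le) (hmem hi)),
    intervalIntegral.integral_add_adjacent_intervals (hint (by simp) (hmem le_rfl))
      (hint (hmem le_rfl) ⟨zero_le_one, le_rfl⟩)]
  simp

theorem abs_integral_floor_div_le {F : ℝ → ℝ} {A x : ℝ}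
    (hA : ∀ t ∈ Set.Icc (0 : ℝ) 1, |F t| ≤ A) (hx : 0 < x) :
    |∫ t in (⌊x⌋₊ : ℝ) / x..1, F t| ≤ A * (1 / x) := by
  have hfloor := natCast_div_mem_Icc_of_le_floor hx le_rfl
  have hA0 : 0 ≤ A := (abs_nonneg _).trans (hA 0 ⟨le_rfl, zero_le_one⟩)
  have hlen : 1 - ⌊x⌋₊ / x ≤ 1 / x := by
    rw [one_sub_div hx.ne']
    gcongr
    linarith [Nat.lt_floor_add_one x]
  rw [← Real.norm_eq_abs]
  calc _ ≤ A * |1 - ⌊x⌋₊ / x| :=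
        intervalIntegral.norm_integral_le_of_norm_le_const fun t ht => by
          rw [Set.uIoc_of_le hfloor.2] at ht
          exact hA t ⟨hfloor.1.trans ht.1.le, ht.2⟩
    _ ≤ A * (1 / x) := by rw [abs_of_nonneg (sub_nonneg.2 hfloor.2)]; gcongr

theorem abs_sum_sub_mul_integral_le {F : ℝ → ℝ} {K : ℝ≥0} {A x : ℝ}
    (hF : LipschitzOnWith K F (Set.Icc 0 1)) (hA : ∀ t ∈ Set.Icc (0 : ℝ) 1, |F t| ≤ A)
    (hx : 0 < x) :
    |∑ r ∈ Icc 1 ⌊x⌋₊, F (r / x) - x * ∫ t in 0..1, F t| ≤ K + A := by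
  have hsplit := integral_eq_sum_add_integral_floor_div hF.continuousOn hx
  set n := ⌊x⌋₊
  have hmem : ∀ {i}, i ≤ n → (i : ℝ) / x ∈ Set.Icc 0 1 := natCast_div_mem_Icc_of_le_floor hx
  have hpiece : ∀ i < n, |(∫ t in (i : ℝ) / x..(i + 1 : ℕ) / x, F t) - 1 / x * F ((i + 1 : ℕ) / x)|
      ≤ K * (1 / x) ^ 2 := fun i hi => by
    have hstep : ((i + 1 : ℕ) : ℝ) / x - i / x = 1 / x := by push_cast; ring
    simpa only [hstep] using abs_integral_sub_mul_le_of_lipschitzOnWith hF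
      (by linarith [one_div_pos.2 hx]) (Set.Icc_subset_Icc (hmem hi.le).1 (hmem hi).2)
  have hsum : ∑ r ∈ Icc 1 n, F (r / x) = x * ∑ i ∈ range n, 1 / x * F ((i + 1 : ℕ) / x) := by
    rw [sum_Icc_one_eq_sum_range, mul_sum]
    exact sum_congr rfl fun i _ => by field_simp
  calc |∑ r ∈ Icc 1 n, F (r / x) - x * ∫ t in 0..1, F t|
      = |x * ∑ i ∈ range n,
            ((∫ t in (i : ℝ) / x..(i + 1 : ℕ) / x, F t) - 1 / x * F ((i + 1 : ℕ) / x))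
          + x * ∫ t in (n : ℝ) / x..1, F t| := by
        rw [← abs_neg, hsum, hsplit, sum_sub_distrib]
        ring_nf
    _ ≤ x * ∑ i ∈ range n,
            |(∫ t in (i : ℝ) / x..(i + 1 : ℕ) / x, F t) - 1 / x * F ((i + 1 : ℕ) / x)|
          + x * |∫ t in (n : ℝ) / x..1, F t| := by
        refine (abs_add_le _ _).trans ?_
        rw [abs_mul, abs_mul, abs_of_pos hx]
        gcongr
        exact abs_sum_le_sum_abs _ _
    _ ≤ x * ∑ _i ∈ range n, K * (1 / x) ^ 2 + x * (A * (1 / x)) := by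
        gcongr with i hi
        · exact hpiece i (mem_range.1 hi)
        · exact abs_integral_floor_div_le hA hx
    _ = K * (n / x) + A := by
        rw [sum_const, card_range, nsmul_eq_mul]
        field_simp
    _ ≤ K + A := by gcongr; exact mul_le_of_le_one_right K.2 (hmem le_rfl).2

noncomputable def scaledSum (C : ℕ → ℝ) (F : ℝ → ℝ) (x : ℝ) : ℝ :=
  ∑ r ∈ Icc 1 ⌊x⌋₊, F (r / x) * C r

theorem abs_scaledSum_sub_sum_le {C : ℕ → ℝ} {F : ℝ → ℝ} {K : ℝ≥0} {A G x : ℝ}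
    (hF : LipschitzOnWith K F (Set.Icc 0 1)) (hA : ∀ t ∈ Set.Icc (0 : ℝ) 1, |F t| ≤ A)
    (hx : 0 < x) (hG : ∀ m ≤ ⌊x⌋₊, |∑ r ∈ Icc 1 m, C r - m| ≤ G) :
    |scaledSum C F x - ∑ r ∈ Icc 1 ⌊x⌋₊, F (r / x)| ≤ (A + K) * G := by
  set n := ⌊x⌋₊
  have hmem : ∀ {i}, i ≤ n → (i : ℝ) / x ∈ Set.Icc 0 1 := natCast_div_mem_Icc_of_le_floor hx
  have hA0 : 0 ≤ A := (abs_nonneg _).trans (hA 0 ⟨le_rfl, zero_le_one⟩)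
  have hG0 : 0 ≤ G := by simpa using hG 0 (Nat.zero_le _)
  have hrw : scaledSum C F x - ∑ r ∈ Icc 1 n, F (r / x)
      = ∑ i ∈ range n, F ((i + 1 : ℕ) / x) * (C (i + 1) - 1) := by
    rw [scaledSum, ← sum_sub_distrib, sum_Icc_one_eq_sum_range]
    exact sum_congr rfl fun i _ => by ring
  have hpartial : ∀ k ≤ n, |∑ i ∈ range k, (C (i + 1) - 1)| ≤ G := fun k hk => by
    simpa [sum_sub_distrib, ← sum_Icc_one_eq_sum_range] using hG k hk
  rw [hrw]
  rcases Nat.eq_zero_or_pos n with hn | hn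
  · rw [hn, sum_range_zero, abs_zero]
    positivity
  refine (abs_sum_range_mul_le hpartial).trans (mul_le_mul_of_nonneg_right ?_ hG0)
  have hlast : |F ((n - 1 + 1 : ℕ) / x)| ≤ A := hA _ (hmem (by omega))
  have hvar : ∑ i ∈ range (n - 1), |F ((i + 1 + 1 : ℕ) / x) - F ((i + 1 : ℕ) / x)| ≤ K := by
    calc _ ≤ ∑ _i ∈ range (n - 1), K * (1 / x) := sum_le_sum fun i hi => by
            have hi := mem_range.1 hi
            have := hF.dist_le_mul _ (hmem (by omega : i + 1 + 1 ≤ n)) _ (hmem (by omega : i + 1 ≤ n))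
            have hstep : ((i + 1 + 1 : ℕ) : ℝ) / x - (i + 1 : ℕ) / x = 1 / x := by push_cast; ring
            rwa [Real.dist_eq, Real.dist_eq, hstep, abs_of_pos (one_div_pos.2 hx)] at this
      _ = K * ((n - 1 : ℕ) / x) := by rw [sum_const, card_range, nsmul_eq_mul]; ring
      _ ≤ K := mul_le_of_le_one_right K.2 (hmem (Nat.sub_le n 1)).2
  linarith

theorem eventually_forall_le_floor_abs_le {g : ℕ → ℝ} (hg : g =o[atTop] (fun m => (m : ℝ)))
    {δ : ℝ} (hδ : 0 < δ) : ∀ᶠ x : ℝ in atTop, ∀ m ≤ ⌊x⌋₊, |g m| ≤ δ * x := by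
  obtain ⟨N, hN⟩ := eventually_atTop.1 (hg.bound hδ)
  filter_upwards [eventually_ge_atTop ((∑ m ∈ range N, |g m|) / δ), eventually_ge_atTop 0]
    with x hxB hx0 m hm
  have hmx : (m : ℝ) ≤ x := (Nat.cast_le.2 hm).trans (Nat.floor_le hx0)
  rcases lt_or_ge m N with hmN | hmN
  · calc |g m| ≤ ∑ m ∈ range N, |g m| :=
          single_le_sum (f := fun m => |g m|) (fun _ _ => abs_nonneg _) (mem_range.2 hmN)
      _ ≤ δ * x := by rwa [div_le_iff₀' hδ] at hxB
  · have := hN m hmN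
    rw [Real.norm_eq_abs, Real.norm_natCast] at this
    exact this.trans (by gcongr)

theorem isLittleO_scaledSum_sub_of_lipschitzOnWith {C : ℕ → ℝ} {F : ℝ → ℝ} {K : ℝ≥0}
    (hS : (fun m : ℕ => ∑ r ∈ Icc 1 m, C r - m) =o[atTop] (fun m => (m : ℝ)))
    (hF : LipschitzOnWith K F (Set.Icc 0 1)) :
    (fun x => scaledSum C F x - x * ∫ t in 0..1, F t) =o[atTop] id := by
  obtain ⟨A, hA⟩ := isCompact_Icc.exists_bound_of_continuousOn hF.continuousOn
  simp only [Real.norm_eq_abs] at hA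
  have hA0 : 0 ≤ A := (abs_nonneg _).trans (hA 0 ⟨le_rfl, zero_le_one⟩)
  have hAbel : (fun x => scaledSum C F x - ∑ r ∈ Icc 1 ⌊x⌋₊, F (r / x)) =o[atTop] id := by
    refine IsLittleO.of_bound fun c hc => ?_
    have hδ : 0 < c / (A + K + 1) := by positivity
    filter_upwards [eventually_forall_le_floor_abs_le hS hδ, eventually_gt_atTop 0] with x hG hx
    rw [Real.norm_eq_abs, id, Real.norm_of_nonneg hx.le]
    calc _ ≤ (A + K) * (c / (A + K + 1) * x) := abs_scaledSum_sub_sum_le hF hA hx hG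
      _ ≤ (A + K + 1) * (c / (A + K + 1) * x) :=
        mul_le_mul_of_nonneg_right (by linarith) (by positivity)
      _ = c * x := by field_simp
  have hRiemann : (fun x => ∑ r ∈ Icc 1 ⌊x⌋₊, F (r / x) - x * ∫ t in 0..1, F t) =o[atTop] id :=
    (IsBigO.of_bound (K + A) ((eventually_gt_atTop 0).mono fun x hx => by
      simpa using abs_sum_sub_mul_integral_le hF hA hx)).trans_isLittleO
      (isLittleO_const_id_atTop (1 : ℝ))
  simpa using hAbel.add hRiemann

theorem exists_lipschitzOnWith_abs_sub_le_of_continuousOn {E : ℝ → ℝ} {a b η : ℝ}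
    (hE : ContinuousOn E (Set.Icc a b)) (hη : 0 < η) :
    ∃ (F : ℝ → ℝ) (K : ℝ≥0), LipschitzOnWith K F (Set.Icc a b) ∧
      ∀ t ∈ Set.Icc a b, |E t - F t| ≤ η := by
  obtain ⟨p, hp⟩ := exists_polynomial_near_of_continuousOn a b E hE η hη
  obtain ⟨K, hK⟩ := (p.contDiff_aeval (𝕜 := ℝ) 1).locallyLipschitz.locallyLipschitzOn
    |>.exists_lipschitzOnWith_of_compact isCompact_Icc
  refine ⟨_, K, hK, fun t ht => ?_⟩
  rw [abs_sub_comm]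
  simpa using (hp t ht).le

theorem abs_scaledSum_sub_scaledSum_le {C : ℕ → ℝ} (hC : ∀ r, 0 ≤ C r) {E F : ℝ → ℝ} {η x : ℝ}
    (hEF : ∀ t ∈ Set.Icc (0 : ℝ) 1, |E t - F t| ≤ η) (hx : 0 < x) :
    |scaledSum C E x - scaledSum C F x| ≤ η * ∑ r ∈ Icc 1 ⌊x⌋₊, C r := by
  rw [scaledSum, scaledSum, ← sum_sub_distrib, mul_sum]
  refine (abs_sum_le_sum_abs _ _).trans (sum_le_sum fun r hr => ?_)
  rw [← sub_mul, abs_mul, abs_of_nonneg (hC r)]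
  exact mul_le_mul_of_nonneg_right
    (hEF _ (natCast_div_mem_Icc_of_le_floor hx (mem_Icc.1 hr).2)) (hC r)

theorem isLittleO_scaledSum_sub {C : ℕ → ℝ} (hC : ∀ r, 0 ≤ C r)
    (hS : (fun m : ℕ => ∑ r ∈ Icc 1 m, C r - m) =o[atTop] (fun m => (m : ℝ)))
    {E : ℝ → ℝ} (hE : ContinuousOn E (Set.Icc 0 1)) :
    (fun x => scaledSum C E x - x * ∫ t in 0..1, E t) =o[atTop] id := by
  refine IsLittleO.of_bound fun c hc => ?_
  obtain ⟨F, K, hF, hEF⟩ :=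
    exists_lipschitzOnWith_abs_sub_le_of_continuousOn hE (by positivity : 0 < c / 4)
  have hint : |(∫ t in 0..1, E t) - ∫ t in 0..1, F t| ≤ c / 4 := by
    rw [← intervalIntegral.integral_sub (hE.intervalIntegrable_of_Icc zero_le_one)
      (hF.continuousOn.intervalIntegrable_of_Icc zero_le_one), ← Real.norm_eq_abs]
    refine (intervalIntegral.norm_integral_le_of_norm_le_const fun t ht =>
      (Real.norm_eq_abs _).trans_le
        (hEF t (Set.Ioc_subset_Icc_self (by rwa [Set.uIoc_of_le zero_le_one] at ht)))).trans_eq ?_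
    norm_num
  filter_upwards [(isLittleO_scaledSum_sub_of_lipschitzOnWith hS hF).bound
      (by positivity : 0 < c / 4), eventually_forall_le_floor_abs_le hS one_pos,
      eventually_gt_atTop 0] with x hFx hG hx
  simp only [Real.norm_eq_abs, id, abs_of_pos hx] at hFx ⊢
  have hmass : ∑ r ∈ Icc 1 ⌊x⌋₊, C r ≤ 2 * x := by
    linarith [(abs_le.1 (hG _ le_rfl)).2, Nat.floor_le hx.le]
  have hpert := abs_scaledSum_sub_scaledSum_le hC hEF hx
  calc _ = |(scaledSum C F x - x * ∫ t in 0..1, F t) + (scaledSum C E x - scaledSum C F x)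
          - x * ((∫ t in 0..1, E t) - ∫ t in 0..1, F t)| := by ring_nf
    _ ≤ c / 4 * x + c / 4 * (2 * x) + x * (c / 4) := by
        refine (abs_sub _ _).trans (add_le_add ((abs_add_le _ _).trans (add_le_add hFx ?_)) ?_)
        · exact hpert.trans (by gcongr)
        · rw [abs_mul, abs_of_pos hx]
          gcongr
    _ = c * x := by ring

theorem isLittleO_sum_sub_of_abs_sub_le {C : ℕ → ℝ} {K a c : ℝ}
    (h : ∀ m : ℕ, 1 ≤ m →
      |(∑ r ∈ Icc 1 m, C r) - ((m : ℝ) - c * log m)| ≤ K * log (m + 1) ^ a) :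
    (fun m : ℕ => ∑ r ∈ Icc 1 m, C r - m) =o[atTop] (fun m => (m : ℝ)) := by
  have hlog : (fun m : ℕ => log m) =o[atTop] (fun m => (m : ℝ)) :=
    isLittleO_log_id_atTop.comp_tendsto tendsto_natCast_atTop_atTop
  have hsucc : (fun m : ℕ => (m : ℝ) + 1) =O[atTop] (fun m => (m : ℝ)) :=
    IsBigO.of_bound 2 ((eventually_ge_atTop 1).mono fun m hm => by
      have : (1 : ℝ) ≤ m := by exact_mod_cast hm
      rw [Real.norm_of_nonneg (by positivity), Real.norm_of_nonneg (by positivity)]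
      linarith)
  have hlogpow : (fun m : ℕ => log ((m : ℝ) + 1) ^ a) =o[atTop] (fun m => (m : ℝ)) :=
    (((isLittleO_log_rpow_rpow_atTop a one_pos).comp_tendsto
      (tendsto_atTop_add_const_right _ 1 tendsto_natCast_atTop_atTop)).congr_right
      (by simp)).trans_isBigO hsucc
  have hmain : (fun m : ℕ => ∑ r ∈ Icc 1 m, C r - (m - c * log m))
      =O[atTop] (fun m : ℕ => log ((m : ℝ) + 1) ^ a) :=
    IsBigO.of_bound K ((eventually_ge_atTop 1).mono fun m hm => by
      rw [Real.norm_eq_abs, Real.norm_of_nonneg (rpow_nonneg (log_nonneg (by simp)) _)]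
      exact h m hm)
  exact ((hmain.trans_isLittleO hlogpow).sub (hlog.const_mul_left c)).congr_left fun m => by ring

theorem stmt_19 (C : ℕ → ℝ) (hCnonneg : ∀ r, 0 ≤ C r)
    (h : ∃ K : ℝ, ∀ m : ℕ, 1 ≤ m →
      |(∑ r ∈ Finset.Icc 1 m, C r) - ((m : ℝ) - (1 / 2) * Real.log m)|
        ≤ K * (Real.log (m + 1)) ^ ((2:ℝ) / 3))
    (E : ℝ → ℝ) (hE : ContinuousOn E (Set.Icc 0 1)) :
    Tendsto
      (fun lam : ℝ =>
        (2 * (∑ r ∈ Finset.Icc 1 ⌊lam / 2⌋₊, E (2 * r / lam) * C r)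
          - lam * ∫ v in (0:ℝ)..1, E v) / lam)
      atTop (nhds 0) := by
  obtain ⟨K, hK⟩ := h
  have hlim := (isLittleO_scaledSum_sub hCnonneg (isLittleO_sum_sub_of_abs_sub_le hK)
    hE).tendsto_div_nhds_zero.comp (tendsto_id.atTop_div_const two_pos)
  refine hlim.congr' ((eventually_ne_atTop 0).mono fun lam hlam => ?_)
  simp only [Function.comp, id, scaledSum, div_div_eq_mul_div, mul_comm _ (2 : ℝ)]
  field_simp
end
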